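/- arXiv:1902.06883 — 9 statements merged into one kernel-verified Lean document; each statement's English description precedes it below -/
import Mathlib

section
/- Fix T > 0 and λ̄ ∈ ℝ, and let v be a smooth function on [0,T] × (0,∞) (all partial derivatives up to the orders appearing exist and are continuous, with equality of mixed partials) with ∂_x v > 0 and ∂_x² v < 0 solving the Merton PDE with parameter λ̄. Then the risk-tolerance function R = −∂_x v/∂_x² v satisfies the fast-diffusion equation ∂_t R + (λ̄²/2) R² ∂_x² R = 0 on [0,T) × (0,∞). -/
open Set

/-- Partial derivative in the time variable. -/
noncomputable def partialT (v : ℝ → ℝ → ℝ) : ℝ → ℝ → ℝ := fun t x => deriv (fun s => v s x) t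

/-- Partial derivative in the wealth variable. -/
noncomputable def partialX (v : ℝ → ℝ → ℝ) : ℝ → ℝ → ℝ := fun t x => deriv (fun y => v t y) x

/-- Second partial derivative in the wealth variable. -/
noncomputable def partialXX (v : ℝ → ℝ → ℝ) : ℝ → ℝ → ℝ := partialX (partialX v)

private lemma px_fderiv {w : ℝ → ℝ → ℝ}
    (hw : ContDiff ℝ (⊤ : ℕ∞) (fun p : ℝ × ℝ => w p.1 p.2)) (t x : ℝ) :
    partialX w t x = fderiv ℝ (fun p : ℝ × ℝ => w p.1 p.2) (t, x) (0, 1) := by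
  have hW := (hw.differentiable (by simp) ((t, x) : ℝ × ℝ)).hasFDerivAt
  have hline : HasDerivAt (fun y : ℝ => ((t, y) : ℝ × ℝ)) ((0 : ℝ), (1 : ℝ)) x :=
    HasDerivAt.prodMk (hasDerivAt_const x t) (hasDerivAt_id x)
  exact (hW.comp_hasDerivAt x hline).deriv

private lemma pt_fderiv {w : ℝ → ℝ → ℝ}
    (hw : ContDiff ℝ (⊤ : ℕ∞) (fun p : ℝ × ℝ => w p.1 p.2)) (t x : ℝ) :
    partialT w t x = fderiv ℝ (fun p : ℝ × ℝ => w p.1 p.2) (t, x) (1, 0) := by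
  have hW := (hw.differentiable (by simp) ((t, x) : ℝ × ℝ)).hasFDerivAt
  have hline : HasDerivAt (fun s : ℝ => ((s, x) : ℝ × ℝ)) ((1 : ℝ), (0 : ℝ)) t :=
    HasDerivAt.prodMk (hasDerivAt_id t) (hasDerivAt_const t x)
  exact (hW.comp_hasDerivAt t hline).deriv

private lemma sliceX_hasDerivAt {w : ℝ → ℝ → ℝ}
    (hw : ContDiff ℝ (⊤ : ℕ∞) (fun p : ℝ × ℝ => w p.1 p.2)) (t x : ℝ) :
    HasDerivAt (fun y => w t y) (partialX w t x) x := by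
  rw [px_fderiv hw t x]
  exact ((hw.differentiable (by simp) ((t, x) : ℝ × ℝ)).hasFDerivAt).comp_hasDerivAt x
    (HasDerivAt.prodMk (hasDerivAt_const x t) (hasDerivAt_id x))

private lemma sliceT_hasDerivAt {w : ℝ → ℝ → ℝ}
    (hw : ContDiff ℝ (⊤ : ℕ∞) (fun p : ℝ × ℝ => w p.1 p.2)) (t x : ℝ) :
    HasDerivAt (fun s => w s x) (partialT w t x) t := by
  rw [pt_fderiv hw t x]
  exact ((hw.differentiable (by simp) ((t, x) : ℝ × ℝ)).hasFDerivAt).comp_hasDerivAt t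
    (HasDerivAt.prodMk (hasDerivAt_id t) (hasDerivAt_const t x))

private lemma fneq_pX {w : ℝ → ℝ → ℝ}
    (hw : ContDiff ℝ (⊤ : ℕ∞) (fun p : ℝ × ℝ => w p.1 p.2)) :
    (fun p : ℝ × ℝ => partialX w p.1 p.2)
      = fun p : ℝ × ℝ => fderiv ℝ (fun q : ℝ × ℝ => w q.1 q.2) p ((0 : ℝ), (1 : ℝ)) := by
  funext p
  have := px_fderiv hw p.1 p.2
  simpa using this

private lemma fneq_pT {w : ℝ → ℝ → ℝ}
    (hw : ContDiff ℝ (⊤ : ℕ∞) (fun p : ℝ × ℝ => w p.1 p.2)) :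
    (fun p : ℝ × ℝ => partialT w p.1 p.2)
      = fun p : ℝ × ℝ => fderiv ℝ (fun q : ℝ × ℝ => w q.1 q.2) p ((1 : ℝ), (0 : ℝ)) := by
  funext p
  have := pt_fderiv hw p.1 p.2
  simpa using this

private lemma contDiff_pX {w : ℝ → ℝ → ℝ}
    (hw : ContDiff ℝ (⊤ : ℕ∞) (fun p : ℝ × ℝ => w p.1 p.2)) :
    ContDiff ℝ (⊤ : ℕ∞) (fun p : ℝ × ℝ => partialX w p.1 p.2) := by
  rw [fneq_pX hw]
  exact (hw.fderiv_right (by simp)).clm_apply contDiff_const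

private lemma contDiff_pT {w : ℝ → ℝ → ℝ}
    (hw : ContDiff ℝ (⊤ : ℕ∞) (fun p : ℝ × ℝ => w p.1 p.2)) :
    ContDiff ℝ (⊤ : ℕ∞) (fun p : ℝ × ℝ => partialT w p.1 p.2) := by
  rw [fneq_pT hw]
  exact (hw.fderiv_right (by simp)).clm_apply contDiff_const

private lemma swapTX {w : ℝ → ℝ → ℝ}
    (hw : ContDiff ℝ (⊤ : ℕ∞) (fun p : ℝ × ℝ => w p.1 p.2)) (t x : ℝ) :
    partialT (partialX w) t x = partialX (partialT w) t x := by
  have hW12 : ContDiff ℝ (⊤ : ℕ∞) (fderiv ℝ (fun p : ℝ × ℝ => w p.1 p.2)) := hw.fderiv_right (by simp)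
  have hW2 := (hW12.differentiable (by simp) ((t, x) : ℝ × ℝ)).hasFDerivAt
  have happ : ∀ u : ℝ × ℝ, HasFDerivAt
      (fun p : ℝ × ℝ => fderiv ℝ (fun q : ℝ × ℝ => w q.1 q.2) p u)
      ((ContinuousLinearMap.apply ℝ ℝ u).comp
        (fderiv ℝ (fderiv ℝ (fun q : ℝ × ℝ => w q.1 q.2)) ((t, x) : ℝ × ℝ))) (t, x) :=
    fun u => (ContinuousLinearMap.apply ℝ ℝ u).hasFDerivAt.comp (t, x) hW2
  have hL : partialT (partialX w) t x
      = fderiv ℝ (fderiv ℝ (fun q : ℝ × ℝ => w q.1 q.2)) (t, x) (1, 0) (0, 1) := by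
    rw [pt_fderiv (contDiff_pX hw) t x, fneq_pX hw, (happ ((0 : ℝ), (1 : ℝ))).fderiv]
    rfl
  have hRR : partialX (partialT w) t x
      = fderiv ℝ (fderiv ℝ (fun q : ℝ × ℝ => w q.1 q.2)) (t, x) (0, 1) (1, 0) := by
    rw [px_fderiv (contDiff_pT hw) t x, fneq_pT hw, (happ ((1 : ℝ), (0 : ℝ))).fderiv]
    rfl
  rw [hL, hRR]
  exact second_derivative_symmetric (fun y => (hw.differentiable (by simp) y).hasFDerivAt) hW2 _ _

/-- If `v` is smooth with `∂ₓv > 0`, `∂ₓₓv < 0` on `[0,T] × (0,∞)`, solving the Merton PDE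
with parameter `λ̄` on `[0,T) × (0,∞)`, then the risk-tolerance function `R = −∂ₓv/∂ₓₓv`
satisfies the fast-diffusion equation `∂ₜR + (λ̄²/2) R² ∂ₓₓR = 0` on `[0,T) × (0,∞)`. -/
theorem risk_tolerance_fast_diffusion (T lamBar : ℝ) (hT : 0 < T)
    (v : ℝ → ℝ → ℝ)
    (hsmooth : ContDiff ℝ (⊤ : ℕ∞) (fun p : ℝ × ℝ => v p.1 p.2))
    (hvx_pos : ∀ t ∈ Icc (0 : ℝ) T, ∀ x ∈ Ioi (0 : ℝ), 0 < partialX v t x)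
    (hvxx_neg : ∀ t ∈ Icc (0 : ℝ) T, ∀ x ∈ Ioi (0 : ℝ), partialXX v t x < 0)
    (hpde : ∀ t ∈ Ico (0 : ℝ) T, ∀ x ∈ Ioi (0 : ℝ),
      partialT v t x - lamBar ^ 2 / 2 * (partialX v t x) ^ 2 / partialXX v t x = 0)
    (R : ℝ → ℝ → ℝ)
    (hR : ∀ t x, R t x = -(partialX v t x) / partialXX v t x) :
    ∀ t ∈ Ico (0 : ℝ) T, ∀ x ∈ Ioi (0 : ℝ),
      partialT R t x + lamBar ^ 2 / 2 * (R t x) ^ 2 * partialXX R t x = 0 := by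
  
  intro t ht x hx
  have htI : t ∈ Icc (0 : ℝ) T := ⟨ht.1, ht.2.le⟩
  have h1 : ContDiff ℝ (⊤ : ℕ∞) (fun p : ℝ × ℝ => partialX v p.1 p.2) := contDiff_pX hsmooth
  have h2 : ContDiff ℝ (⊤ : ℕ∞) (fun p : ℝ × ℝ => partialXX v p.1 p.2) := contDiff_pX h1
  have h3 : ContDiff ℝ (⊤ : ℕ∞) (fun p : ℝ × ℝ => partialX (partialXX v) p.1 p.2) := contDiff_pX h2
  have hTv : ContDiff ℝ (⊤ : ℕ∞) (fun p : ℝ × ℝ => partialT v p.1 p.2) := contDiff_pT hsmooth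
  have hTXv : ContDiff ℝ (⊤ : ℕ∞) (fun p : ℝ × ℝ => partialX (partialT v) p.1 p.2) := contDiff_pX hTv
  have hu2ne : ∀ y ∈ Ioi (0 : ℝ), partialXX v t y ≠ 0 :=
    fun y hy => ne_of_lt (hvxx_neg t htI y hy)
  have hPDE : ∀ y ∈ Ioi (0 : ℝ), partialT v t y
      = lamBar ^ 2 / 2 * (partialX v t y) ^ 2 / partialXX v t y :=
    fun y hy => sub_eq_zero.mp (hpde t ht y hy)
  have hu1 : ∀ y : ℝ, HasDerivAt (fun y' => partialX v t y') (partialXX v t y) y :=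
    fun y => sliceX_hasDerivAt h1 t y
  have hu2 : ∀ y : ℝ, HasDerivAt (fun y' => partialXX v t y') (partialX (partialXX v) t y) y :=
    fun y => sliceX_hasDerivAt h2 t y
  have hu3 : ∀ y : ℝ, HasDerivAt (fun y' => partialX (partialXX v) t y')
      (partialX (partialX (partialXX v)) t y) y := fun y => sliceX_hasDerivAt h3 t y
  have hx0 : partialXX v t x ≠ 0 := hu2ne x hx
  -- Step B : x-derivative of ∂ₜ v on the half-line
  have hB : ∀ y ∈ Ioi (0 : ℝ), partialX (partialT v) t y =
      (2 * (lamBar ^ 2 / 2) * partialX v t y * (partialXX v t y) ^ 2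
        - lamBar ^ 2 / 2 * (partialX v t y) ^ 2 * partialX (partialXX v) t y)
        / (partialXX v t y) ^ 2 := by
    intro y hy
    have hne := hu2ne y hy
    have hG : HasDerivAt (fun y' => lamBar ^ 2 / 2 * (partialX v t y') ^ 2 / partialXX v t y')
        ((2 * (lamBar ^ 2 / 2) * partialX v t y * (partialXX v t y) ^ 2
          - lamBar ^ 2 / 2 * (partialX v t y) ^ 2 * partialX (partialXX v) t y)
          / (partialXX v t y) ^ 2) y := by
      have h := (((hu1 y).pow 2).const_mul (lamBar ^ 2 / 2)).div (hu2 y) hne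
      convert h using 1
      · rfl
      · rfl
      · rfl
      simp only [Pi.pow_apply, Pi.neg_apply, Pi.mul_apply, Pi.add_apply, Pi.sub_apply]
      field_simp
      ring
    have hev : (fun y' => partialT v t y') =ᶠ[nhds y]
        (fun y' => lamBar ^ 2 / 2 * (partialX v t y') ^ 2 / partialXX v t y') :=
      Filter.eventuallyEq_of_mem (Ioi_mem_nhds hy) (fun z hz => hPDE z hz)
    calc partialX (partialT v) t y = deriv (fun y' => partialT v t y') y := rfl
      _ = _ := by rw [hev.deriv_eq, hG.deriv]
  -- Step C : second x-derivative of ∂ₜ v at x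
  have hE2 : HasDerivAt (fun y =>
      (2 * (lamBar ^ 2 / 2) * partialX v t y * (partialXX v t y) ^ 2
        - lamBar ^ 2 / 2 * (partialX v t y) ^ 2 * partialX (partialXX v) t y)
        / (partialXX v t y) ^ 2)
      ((2 * (lamBar ^ 2 / 2) * (partialXX v t x) ^ 4
        - 2 * (lamBar ^ 2 / 2) * partialX v t x * (partialXX v t x) ^ 2 * partialX (partialXX v) t x
        - lamBar ^ 2 / 2 * (partialX v t x) ^ 2 * partialXX v t x * partialX (partialX (partialXX v)) t x
        + 2 * (lamBar ^ 2 / 2) * (partialX v t x) ^ 2 * (partialX (partialXX v) t x) ^ 2)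
        / (partialXX v t x) ^ 3) x := by
    have h := ((((hu1 x).const_mul (2 * (lamBar ^ 2 / 2))).mul ((hu2 x).pow 2)).sub
        ((((hu1 x).pow 2).const_mul (lamBar ^ 2 / 2)).mul (hu3 x))).div
        ((hu2 x).pow 2) (pow_ne_zero 2 hx0)
    convert h using 1
    · rfl
    · rfl
    · rfl
    simp only [Pi.pow_apply, Pi.neg_apply, Pi.mul_apply, Pi.add_apply, Pi.sub_apply]
    field_simp
    ring
  have hb2' : partialX (partialX (partialT v)) t x =
      (2 * (lamBar ^ 2 / 2) * (partialXX v t x) ^ 4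
        - 2 * (lamBar ^ 2 / 2) * partialX v t x * (partialXX v t x) ^ 2 * partialX (partialXX v) t x
        - lamBar ^ 2 / 2 * (partialX v t x) ^ 2 * partialXX v t x * partialX (partialX (partialXX v)) t x
        + 2 * (lamBar ^ 2 / 2) * (partialX v t x) ^ 2 * (partialX (partialXX v) t x) ^ 2)
        / (partialXX v t x) ^ 3 := by
    have hev : (fun y => partialX (partialT v) t y) =ᶠ[nhds x]
        (fun y => (2 * (lamBar ^ 2 / 2) * partialX v t y * (partialXX v t y) ^ 2
          - lamBar ^ 2 / 2 * (partialX v t y) ^ 2 * partialX (partialXX v) t y)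
          / (partialXX v t y) ^ 2) :=
      Filter.eventuallyEq_of_mem (Ioi_mem_nhds hx) (fun z hz => hB z hz)
    calc partialX (partialX (partialT v)) t x = deriv (fun y => partialX (partialT v) t y) x := rfl
      _ = _ := by rw [hev.deriv_eq, hE2.deriv]
  -- x-derivative of R on the half-line
  have hRfun : ∀ s : ℝ, (fun y' => R s y') = fun y' => -(partialX v s y') / partialXX v s y' :=
    fun s => funext fun y' => hR s y'
  have hF : ∀ y ∈ Ioi (0 : ℝ), partialX R t y =
      (-(partialXX v t y) ^ 2 + partialX v t y * partialX (partialXX v) t y)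
        / (partialXX v t y) ^ 2 := by
    intro y hy
    have hne := hu2ne y hy
    have hG : HasDerivAt (fun y' => -(partialX v t y') / partialXX v t y')
        ((-(partialXX v t y) ^ 2 + partialX v t y * partialX (partialXX v) t y)
          / (partialXX v t y) ^ 2) y := by
      have h := ((hu1 y).neg.div (hu2 y) hne)
      convert h using 1
      · rfl
      · rfl
      · rfl
      simp only [Pi.pow_apply, Pi.neg_apply, Pi.mul_apply, Pi.add_apply, Pi.sub_apply]
      field_simp
      ring
    calc partialX R t y = deriv (fun y' => R t y') y := rfl
      _ = _ := by rw [hRfun t, hG.deriv]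
  -- second x-derivative of R at x
  have hF2 : HasDerivAt (fun y =>
      (-(partialXX v t y) ^ 2 + partialX v t y * partialX (partialXX v) t y)
        / (partialXX v t y) ^ 2)
      (((partialXX v t x) ^ 2 * partialX (partialXX v) t x
        + partialX v t x * partialXX v t x * partialX (partialX (partialXX v)) t x
        - 2 * partialX v t x * (partialX (partialXX v) t x) ^ 2)
        / (partialXX v t x) ^ 3) x := by
    have h := ((((hu2 x).pow 2).neg.add ((hu1 x).mul (hu3 x))).div
        ((hu2 x).pow 2) (pow_ne_zero 2 hx0))
    convert h using 1
    · rfl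
    · rfl
    · rfl
    simp only [Pi.pow_apply, Pi.neg_apply, Pi.mul_apply, Pi.add_apply, Pi.sub_apply]
    field_simp
    ring
  have hpxxR : partialXX R t x =
      ((partialXX v t x) ^ 2 * partialX (partialXX v) t x
        + partialX v t x * partialXX v t x * partialX (partialX (partialXX v)) t x
        - 2 * partialX v t x * (partialX (partialXX v) t x) ^ 2)
        / (partialXX v t x) ^ 3 := by
    have hev : (fun y => partialX R t y) =ᶠ[nhds x]
        (fun y => (-(partialXX v t y) ^ 2 + partialX v t y * partialX (partialXX v) t y)
          / (partialXX v t y) ^ 2) :=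
      Filter.eventuallyEq_of_mem (Ioi_mem_nhds hx) (fun z hz => hF z hz)
    calc partialXX R t x = deriv (fun y => partialX R t y) x := rfl
      _ = _ := by rw [hev.deriv_eq, hF2.deriv]
  -- time derivative of R at (t,x)
  have hbT1 : HasDerivAt (fun s => partialX v s x) (partialT (partialX v) t x) t :=
    sliceT_hasDerivAt h1 t x
  have hbT2 : HasDerivAt (fun s => partialXX v s x) (partialT (partialXX v) t x) t :=
    sliceT_hasDerivAt h2 t x
  have hpTR : partialT R t x = (-(partialT (partialX v) t x) * partialXX v t x
      + partialX v t x * partialT (partialXX v) t x) / (partialXX v t x) ^ 2 := by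
    have h := hbT1.neg.div hbT2 hx0
    have heq : (fun s => R s x) = fun s => -(partialX v s x) / partialXX v s x :=
      funext fun s => hR s x
    calc partialT R t x = deriv (fun s => R s x) t := rfl
      _ = _ := by rw [heq, show (fun s => -partialX v s x / partialXX v s x) = (-fun s => partialX v s x) / fun s => partialXX v s x from rfl, h.deriv]; simp only [Pi.neg_apply]; ring
  -- Clairaut swaps
  have hswap1 : partialT (partialX v) t x = partialX (partialT v) t x := swapTX hsmooth t x
  have hswap2 : partialT (partialXX v) t x = partialX (partialX (partialT v)) t x := by
    have e1 : partialT (partialXX v) t x = partialX (partialT (partialX v)) t x :=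
      swapTX h1 t x
    have e2 : partialT (partialX v) = partialX (partialT v) :=
      funext fun a => funext fun b => swapTX hsmooth a b
    rw [e1, e2]
  have hb1x : partialT (partialX v) t x =
      (2 * (lamBar ^ 2 / 2) * partialX v t x * (partialXX v t x) ^ 2
        - lamBar ^ 2 / 2 * (partialX v t x) ^ 2 * partialX (partialXX v) t x)
        / (partialXX v t x) ^ 2 := by rw [hswap1]; exact hB x hx
  have hb2x : partialT (partialXX v) t x =
      (2 * (lamBar ^ 2 / 2) * (partialXX v t x) ^ 4
        - 2 * (lamBar ^ 2 / 2) * partialX v t x * (partialXX v t x) ^ 2 * partialX (partialXX v) t x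
        - lamBar ^ 2 / 2 * (partialX v t x) ^ 2 * partialXX v t x * partialX (partialX (partialXX v)) t x
        + 2 * (lamBar ^ 2 / 2) * (partialX v t x) ^ 2 * (partialX (partialXX v) t x) ^ 2)
        / (partialXX v t x) ^ 3 := by rw [hswap2]; exact hb2'
  rw [hpTR, hb1x, hb2x, hpxxR, hR t x]
  field_simp
  ring
end

section
/- Fix T > 0 and λ̄ ∈ ℝ, and let R : [0,T] × (0,∞) → (0,∞) be a smooth positive function satisfying the fast-diffusion equation ∂_t R + (λ̄²/2) R² ∂_x² R = 0 on [0,T) × (0,∞). Define the operators D₁ w = R ∂_x w and L w = ∂_t w + (λ̄²/2) R² ∂_x² w + λ̄² R ∂_x w. Then for every smooth function w on [0,T] × (0,∞) (with continuous and equal mixed partial derivatives up to the orders appearing), L(D₁ w) = D₁(L w) at every point of [0,T) × (0,∞); in other words, the operators L and D₁ commute. -/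
open Set

/-- The first-order operator `D₁ w = R ∂ₓ w`. -/
noncomputable def D1 (R w : ℝ → ℝ → ℝ) : ℝ → ℝ → ℝ := fun t x => R t x * partialX w t x

/-- The linear Merton operator `L w = ∂ₜw + (λ̄²/2) R² ∂ₓₓw + λ̄² R ∂ₓw`. -/
noncomputable def LOp (lam : ℝ) (R w : ℝ → ℝ → ℝ) : ℝ → ℝ → ℝ := fun t x =>
  partialT w t x + lam ^ 2 / 2 * (R t x) ^ 2 * partialXX w t x
    + lam ^ 2 * R t x * partialX w t x

section Aux
variable {f g : ℝ → ℝ → ℝ}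

lemma sliceX (hf : ContDiff ℝ (⊤ : ℕ∞) (fun p : ℝ × ℝ => f p.1 p.2)) (t : ℝ) :
    ContDiff ℝ (⊤ : ℕ∞) (fun y => f t y) := hf.comp (contDiff_const.prodMk contDiff_id)

lemma sliceT (hf : ContDiff ℝ (⊤ : ℕ∞) (fun p : ℝ × ℝ => f p.1 p.2)) (x : ℝ) :
    ContDiff ℝ (⊤ : ℕ∞) (fun s => f s x) := hf.comp (contDiff_id.prodMk contDiff_const)

lemma hXderiv (hf : ContDiff ℝ (⊤ : ℕ∞) (fun p : ℝ × ℝ => f p.1 p.2)) (t x : ℝ) :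
    HasDerivAt (fun y => f t y) (partialX f t x) x :=
  (((sliceX hf t).differentiable (by simp)) x).hasDerivAt

lemma hTderiv (hf : ContDiff ℝ (⊤ : ℕ∞) (fun p : ℝ × ℝ => f p.1 p.2)) (t x : ℝ) :
    HasDerivAt (fun s => f s x) (partialT f t x) t :=
  (((sliceT hf x).differentiable (by simp)) t).hasDerivAt

lemma partialX_fderiv (hf : ContDiff ℝ (⊤ : ℕ∞) (fun p : ℝ × ℝ => f p.1 p.2)) (t x : ℝ) :
    partialX f t x = fderiv ℝ (fun p : ℝ × ℝ => f p.1 p.2) (t, x) (0, 1) := by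
  have hline : HasDerivAt (fun y : ℝ => ((t, y) : ℝ × ℝ)) ((0 : ℝ), (1 : ℝ)) x :=
    (hasDerivAt_const x t).prodMk (hasDerivAt_id x)
  have hF := (hf.differentiable (by simp) (t, x)).hasFDerivAt
  simpa [partialX, Function.comp_def] using (hF.comp_hasDerivAt x hline).deriv

lemma partialT_fderiv (hf : ContDiff ℝ (⊤ : ℕ∞) (fun p : ℝ × ℝ => f p.1 p.2)) (t x : ℝ) :
    partialT f t x = fderiv ℝ (fun p : ℝ × ℝ => f p.1 p.2) (t, x) (1, 0) := by
  have hline : HasDerivAt (fun s : ℝ => ((s, x) : ℝ × ℝ)) ((1 : ℝ), (0 : ℝ)) t :=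
    (hasDerivAt_id t).prodMk (hasDerivAt_const t x)
  have hF := (hf.differentiable (by simp) (t, x)).hasFDerivAt
  simpa [partialT, Function.comp_def] using (hF.comp_hasDerivAt t hline).deriv

lemma pX_contDiff (hf : ContDiff ℝ (⊤ : ℕ∞) (fun p : ℝ × ℝ => f p.1 p.2)) :
    ContDiff ℝ (⊤ : ℕ∞) (fun p : ℝ × ℝ => partialX f p.1 p.2) := by
  have h : (fun p : ℝ × ℝ => partialX f p.1 p.2)
      = fun p => fderiv ℝ (fun q : ℝ × ℝ => f q.1 q.2) p (0, 1) := by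
    funext p; exact partialX_fderiv hf p.1 p.2
  rw [h]
  exact (hf.fderiv_right (by simp)).clm_apply contDiff_const

lemma pT_contDiff (hf : ContDiff ℝ (⊤ : ℕ∞) (fun p : ℝ × ℝ => f p.1 p.2)) :
    ContDiff ℝ (⊤ : ℕ∞) (fun p : ℝ × ℝ => partialT f p.1 p.2) := by
  have h : (fun p : ℝ × ℝ => partialT f p.1 p.2)
      = fun p => fderiv ℝ (fun q : ℝ × ℝ => f q.1 q.2) p (1, 0) := by
    funext p; exact partialT_fderiv hf p.1 p.2
  rw [h]
  exact (hf.fderiv_right (by simp)).clm_apply contDiff_const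

lemma fderiv_fderiv_apply {F : ℝ × ℝ → ℝ} (hF : ContDiff ℝ (⊤ : ℕ∞) F) (p u v : ℝ × ℝ) :
    fderiv ℝ (fun q => fderiv ℝ F q v) p u = fderiv ℝ (fderiv ℝ F) p u v := by
  have h2 : DifferentiableAt ℝ (fderiv ℝ F) p :=
    ((hF.fderiv_right (m := (⊤ : ℕ∞)) (by simp)).differentiable (by simp)) p
  have h3 := ((ContinuousLinearMap.apply ℝ ℝ v).hasFDerivAt.comp p h2.hasFDerivAt).fderiv
  calc fderiv ℝ (fun q => fderiv ℝ F q v) p u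
      = ((ContinuousLinearMap.apply ℝ ℝ v).comp (fderiv ℝ (fderiv ℝ F) p)) u := by
        rw [← h3]; rfl
    _ = _ := rfl

lemma mixed (hf : ContDiff ℝ (⊤ : ℕ∞) (fun p : ℝ × ℝ => f p.1 p.2)) (t x : ℝ) :
    partialT (partialX f) t x = partialX (partialT f) t x := by
  set F := fun p : ℝ × ℝ => f p.1 p.2 with hFdef
  have hd : ∀ y, HasFDerivAt F (fderiv ℝ F y) y :=
    fun y => (hf.differentiable (by simp) y).hasFDerivAt
  have hx : HasFDerivAt (fderiv ℝ F) (fderiv ℝ (fderiv ℝ F) (t, x)) (t, x) :=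
    (((hf.fderiv_right (m := (⊤ : ℕ∞)) (by simp)).differentiable (by simp)) (t, x)).hasFDerivAt
  have hsymm := second_derivative_symmetric hd hx (0, 1) (1, 0)
  have h1 : partialT (partialX f) t x = fderiv ℝ (fderiv ℝ F) (t, x) (1, 0) (0, 1) := by
    rw [partialT_fderiv (pX_contDiff hf) t x]
    have h : (fun p : ℝ × ℝ => partialX f p.1 p.2) = fun q => fderiv ℝ F q (0, 1) :=
      funext fun p => partialX_fderiv hf p.1 p.2
    rw [h, fderiv_fderiv_apply hf]
  have h2 : partialX (partialT f) t x = fderiv ℝ (fderiv ℝ F) (t, x) (0, 1) (1, 0) := by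
    rw [partialX_fderiv (pT_contDiff hf) t x]
    have h : (fun p : ℝ × ℝ => partialT f p.1 p.2) = fun q => fderiv ℝ F q (1, 0) :=
      funext fun p => partialT_fderiv hf p.1 p.2
    rw [h, fderiv_fderiv_apply hf]
  rw [h1, h2, hsymm]

end Aux

/-- If `R` is a smooth positive function on `[0,T] × (0,∞)` solving the fast-diffusion
equation `∂ₜR + (λ̄²/2) R² ∂ₓₓR = 0` on `[0,T) × (0,∞)`, then the operators
`L = ∂ₜ + (λ̄²/2) R² ∂ₓₓ + λ̄² R ∂ₓ` and `D₁ = R ∂ₓ` commute on smooth functions: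
`L(D₁ w) = D₁(L w)` at every point of `[0,T) × (0,∞)`. -/
theorem LOp_D1_commute (T lamBar : ℝ) (hT : 0 < T)
    (R : ℝ → ℝ → ℝ)
    (hRsmooth : ContDiff ℝ (⊤ : ℕ∞) (fun p : ℝ × ℝ => R p.1 p.2))
    (hRpos : ∀ t ∈ Icc (0 : ℝ) T, ∀ x ∈ Ioi (0 : ℝ), 0 < R t x)
    (hRpde : ∀ t ∈ Ico (0 : ℝ) T, ∀ x ∈ Ioi (0 : ℝ),
      partialT R t x + lamBar ^ 2 / 2 * (R t x) ^ 2 * partialXX R t x = 0) :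
    ∀ w : ℝ → ℝ → ℝ, ContDiff ℝ (⊤ : ℕ∞) (fun p : ℝ × ℝ => w p.1 p.2) →
      ∀ t ∈ Ico (0 : ℝ) T, ∀ x ∈ Ioi (0 : ℝ),
        LOp lamBar R (D1 R w) t x = D1 R (LOp lamBar R w) t x := by
  intro w hw t ht x hx
  have hpde := hRpde t ht x hx
  have hRx := pX_contDiff hRsmooth
  have hwx := pX_contDiff hw
  have hwxx := pX_contDiff hwx
  have hwt := pT_contDiff hw
  -- first x-derivative of D1 w, everywhere
  have e1 : ∀ s y, partialX (D1 R w) s y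
      = partialX R s y * partialX w s y + R s y * partialXX w s y :=
    fun s y => ((hXderiv hRsmooth s y).mul (hXderiv hwx s y)).deriv
  -- t-derivative of D1 w at (t,x)
  have e2 : partialT (D1 R w) t x
      = partialT R t x * partialX w t x + R t x * partialT (partialX w) t x :=
    ((hTderiv hRsmooth t x).mul (hTderiv hwx t x)).deriv
  -- second x-derivative of D1 w at (t,x)
  have hcong : (fun y => partialX (D1 R w) t y)
      = fun y => partialX R t y * partialX w t y + R t y * partialXX w t y :=
    funext fun y => e1 t y
  have e3 : partialXX (D1 R w) t x
      = (partialX (partialX R) t x * partialX w t x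
          + partialX R t x * partialX (partialX w) t x)
        + (partialX R t x * partialX (partialX w) t x
          + R t x * partialX (partialX (partialX w)) t x) := by
    show deriv (fun y => partialX (D1 R w) t y) x = _
    rw [hcong]
    exact (((hXderiv hRx t x).mul (hXderiv hwx t x)).add
      ((hXderiv hRsmooth t x).mul (hXderiv hwxx t x))).deriv
  -- x-derivative of L w at (t,x)
  have h_a := hXderiv hwt t x
  have h_R := hXderiv hRsmooth t x
  have h_b := ((h_R.pow 2).const_mul (lamBar ^ 2 / 2)).mul (hXderiv hwxx t x)
  have h_c := (h_R.const_mul (lamBar ^ 2)).mul (hXderiv hwx t x)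
  have e4 : partialX (LOp lamBar R w) t x = _ := ((h_a.add h_b).add h_c).deriv
  have hmix := mixed hw t x
  show partialT (D1 R w) t x + lamBar ^ 2 / 2 * (R t x) ^ 2 * partialXX (D1 R w) t x
      + lamBar ^ 2 * R t x * partialX (D1 R w) t x
      = R t x * partialX (LOp lamBar R w) t x
  rw [e2, e3, e1 t x, e4, hmix]
  simp only [partialXX, Pi.pow_apply] at hpde ⊢
  ring_nf
  linear_combination (partialX w t x) * hpde
end

section
/- Fix T > 0 and λ̄ ∈ ℝ, and let v be a C^∞ function on [0,T] × (0,∞) with ∂_x v > 0 and ∂_x² v < 0 solving the Merton PDE with parameter λ̄; set R = −∂_x v/∂_x² v, D₁ w = R ∂_x w, and L w = ∂_t w + (λ̄²/2) R² ∂_x² w + λ̄² R ∂_x w. Then for every integer k ≥ 0, L(D₁^k v) = 0 on [0,T) × (0,∞); in particular L(D₁ v) = 0 and L(D₁² v) = 0. -/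
open Set

open Topology Filter


private def uc (w : ℝ → ℝ → ℝ) : ℝ × ℝ → ℝ := fun p => w p.1 p.2

private noncomputable def pX (f : ℝ × ℝ → ℝ) : ℝ × ℝ → ℝ := fun q => fderiv ℝ f q (0, 1)
private noncomputable def pT (f : ℝ × ℝ → ℝ) : ℝ × ℝ → ℝ := fun q => fderiv ℝ f q (1, 0)

private lemma hasDerivAt_pX {f : ℝ × ℝ → ℝ} {p : ℝ × ℝ} (hf : DifferentiableAt ℝ f p) :
    HasDerivAt (fun y => f (p.1, y)) (pX f p) p.2 := by
  have hg : HasDerivAt (fun y : ℝ => ((p.1, y) : ℝ × ℝ)) (0, 1) p.2 :=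
    (hasDerivAt_const _ _).prodMk (hasDerivAt_id _)
  have h : HasFDerivAt f (fderiv ℝ f p) ((fun y : ℝ => ((p.1, y) : ℝ × ℝ)) p.2) := by
    simpa using hf.hasFDerivAt
  exact h.comp_hasDerivAt p.2 hg

private lemma hasDerivAt_pT {f : ℝ × ℝ → ℝ} {p : ℝ × ℝ} (hf : DifferentiableAt ℝ f p) :
    HasDerivAt (fun s => f (s, p.2)) (pT f p) p.1 := by
  have hg : HasDerivAt (fun s : ℝ => ((s, p.2) : ℝ × ℝ)) (1, 0) p.1 :=
    (hasDerivAt_id _).prodMk (hasDerivAt_const _ _)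
  have h : HasFDerivAt f (fderiv ℝ f p) ((fun s : ℝ => ((s, p.2) : ℝ × ℝ)) p.1) := by
    simpa using hf.hasFDerivAt
  exact h.comp_hasDerivAt p.1 hg

private lemma contDiffAt_pX {f : ℝ × ℝ → ℝ} {p : ℝ × ℝ} (hf : ContDiffAt ℝ (⊤ : ℕ∞) f p) :
    ContDiffAt ℝ (⊤ : ℕ∞) (pX f) p :=
  (hf.fderiv_right (by simp)).clm_apply contDiffAt_const

private lemma contDiffAt_pT {f : ℝ × ℝ → ℝ} {p : ℝ × ℝ} (hf : ContDiffAt ℝ (⊤ : ℕ∞) f p) :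
    ContDiffAt ℝ (⊤ : ℕ∞) (pT f) p :=
  (hf.fderiv_right (by simp)).clm_apply contDiffAt_const

private lemma contDiff_pX_s7 {f : ℝ × ℝ → ℝ} (hf : ContDiff ℝ (⊤ : ℕ∞) f) : ContDiff ℝ (⊤ : ℕ∞) (pX f) :=
  (hf.fderiv_right (by simp)).clm_apply contDiff_const

private lemma contDiff_pT_s7 {f : ℝ × ℝ → ℝ} (hf : ContDiff ℝ (⊤ : ℕ∞) f) : ContDiff ℝ (⊤ : ℕ∞) (pT f) :=
  (hf.fderiv_right (by simp)).clm_apply contDiff_const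

private lemma fderiv_fderiv_apply_s7 {f : ℝ × ℝ → ℝ} {p : ℝ × ℝ} (hf : ContDiffAt ℝ (⊤ : ℕ∞) f p)
    (w a : ℝ × ℝ) :
    fderiv ℝ (fun q => fderiv ℝ f q a) p w = fderiv ℝ (fderiv ℝ f) p w a := by
  have hd : DifferentiableAt ℝ (fderiv ℝ f) p :=
    (hf.fderiv_right (m := (⊤ : ℕ∞)) (by simp)).differentiableAt (by simp)
  rw [fderiv_clm_apply hd (differentiableAt_const a)]
  simp

private lemma pT_pX {f : ℝ × ℝ → ℝ} {p : ℝ × ℝ} (hf : ContDiffAt ℝ (⊤ : ℕ∞) f p) :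
    pT (pX f) p = pX (pT f) p := by
  have hs : IsSymmSndFDerivAt ℝ f p := hf.isSymmSndFDerivAt (by rw [minSmoothness_of_isRCLikeNormedField]; exact WithTop.coe_le_coe.mpr (le_top : (2 : ℕ∞) ≤ ⊤))
  show fderiv ℝ (fun q => fderiv ℝ f q (0,1)) p (1,0)
      = fderiv ℝ (fun q => fderiv ℝ f q (1,0)) p (0,1)
  rw [fderiv_fderiv_apply_s7 hf, fderiv_fderiv_apply_s7 hf]
  exact hs.eq _ _

private noncomputable def RRf (F : ℝ × ℝ → ℝ) : ℝ × ℝ → ℝ :=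
  fun q => -(pX F q) / pX (pX F) q

private noncomputable def RXf (F : ℝ × ℝ → ℝ) : ℝ × ℝ → ℝ := fun q =>
  (-(pX (pX F) q) * pX (pX F) q - -(pX F q) * pX (pX (pX F)) q) / pX (pX F) q ^ 2

private noncomputable def RTf (F : ℝ × ℝ → ℝ) : ℝ × ℝ → ℝ := fun q =>
  (-(pX (pT F) q) * pX (pX F) q - -(pX F q) * pX (pX (pT F)) q) / pX (pX F) q ^ 2

private noncomputable def RXXf (F : ℝ × ℝ → ℝ) : ℝ × ℝ → ℝ := fun q =>
  ((-(pX (pX (pX F)) q) * pX (pX F) q + -(pX (pX F) q) * pX (pX (pX F)) q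
      - (-(pX (pX F) q) * pX (pX (pX F)) q + -(pX F q) * pX (pX (pX (pX F))) q))
        * pX (pX F) q ^ 2
    - (-(pX (pX F) q) * pX (pX F) q - -(pX F q) * pX (pX (pX F)) q)
        * (((2 : ℕ) : ℝ) * pX (pX F) q ^ 1 * pX (pX (pX F)) q)) / (pX (pX F) q ^ 2) ^ 2

private lemma hasDerivAt_RRf_x {F : ℝ × ℝ → ℝ} (hF : ContDiff ℝ (⊤ : ℕ∞) F) {q : ℝ × ℝ}
    (hq : pX (pX F) q ≠ 0) :
    HasDerivAt (fun y => RRf F (q.1, y)) (RXf F q) q.2 := by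
  have h1 : HasDerivAt (fun y => pX F (q.1, y)) (pX (pX F) q) q.2 :=
    hasDerivAt_pX ((contDiff_pX_s7 hF).differentiable (by simp) q)
  have h2 : HasDerivAt (fun y => pX (pX F) (q.1, y)) (pX (pX (pX F)) q) q.2 :=
    hasDerivAt_pX ((contDiff_pX_s7 (contDiff_pX_s7 hF)).differentiable (by simp) q)
  exact h1.neg.div h2 hq

private lemma hasDerivAt_RXf_x {F : ℝ × ℝ → ℝ} (hF : ContDiff ℝ (⊤ : ℕ∞) F) {q : ℝ × ℝ}
    (hq : pX (pX F) q ≠ 0) :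
    HasDerivAt (fun y => RXf F (q.1, y)) (RXXf F q) q.2 := by
  have h1 : HasDerivAt (fun y => pX F (q.1, y)) (pX (pX F) q) q.2 :=
    hasDerivAt_pX ((contDiff_pX_s7 hF).differentiable (by simp) q)
  have h2 : HasDerivAt (fun y => pX (pX F) (q.1, y)) (pX (pX (pX F)) q) q.2 :=
    hasDerivAt_pX ((contDiff_pX_s7 (contDiff_pX_s7 hF)).differentiable (by simp) q)
  have h3 : HasDerivAt (fun y => pX (pX (pX F)) (q.1, y)) (pX (pX (pX (pX F))) q) q.2 :=
    hasDerivAt_pX ((contDiff_pX_s7 (contDiff_pX_s7 (contDiff_pX_s7 hF))).differentiable (by simp) q)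
  exact ((h2.neg.mul h2).sub (h1.neg.mul h3)).div (h2.pow 2) (pow_ne_zero 2 hq)

private lemma hasDerivAt_RRf_t {F : ℝ × ℝ → ℝ} (hF : ContDiff ℝ (⊤ : ℕ∞) F) {q : ℝ × ℝ}
    (hq : pX (pX F) q ≠ 0) :
    HasDerivAt (fun s => RRf F (s, q.2)) (RTf F q) q.1 := by
  have h1 : HasDerivAt (fun s => pX F (s, q.2)) (pT (pX F) q) q.1 :=
    hasDerivAt_pT ((contDiff_pX_s7 hF).differentiable (by simp) q)
  have h2 : HasDerivAt (fun s => pX (pX F) (s, q.2)) (pT (pX (pX F)) q) q.1 :=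
    hasDerivAt_pT ((contDiff_pX_s7 (contDiff_pX_s7 hF)).differentiable (by simp) q)
  have hs1 : pT (pX F) q = pX (pT F) q := pT_pX hF.contDiffAt
  have hs1' : pT (pX F) = pX (pT F) := funext fun r => pT_pX hF.contDiffAt
  have hs2 : pT (pX (pX F)) q = pX (pX (pT F)) q := by
    rw [pT_pX (contDiff_pX_s7 hF).contDiffAt, hs1']
  rw [hs1] at h1
  rw [hs2] at h2
  exact h1.neg.div h2 hq

private lemma contDiffAt_RRf {F : ℝ × ℝ → ℝ} (hF : ContDiff ℝ (⊤ : ℕ∞) F) {q : ℝ × ℝ}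
    (hq : pX (pX F) q ≠ 0) :
    ContDiffAt ℝ (⊤ : ℕ∞) (RRf F) q :=
  ((contDiff_pX_s7 hF).contDiffAt.neg).div (contDiff_pX_s7 (contDiff_pX_s7 hF)).contDiffAt hq

/-- If `v` is a `C^∞` function on `[0,T] × (0,∞)` with `∂ₓv > 0`, `∂ₓₓv < 0` solving the
Merton PDE with parameter `λ̄`, `R = −∂ₓv/∂ₓₓv`, then `L(D₁ᵏ v) = 0` on `[0,T) × (0,∞)` for
every `k ≥ 0`; in particular `L(D₁ v) = 0` and `L(D₁² v) = 0`. -/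
theorem LOp_iterated_D1_eq_zero (T lamBar : ℝ) (hT : 0 < T)
    (v : ℝ → ℝ → ℝ)
    (hsmooth : ContDiff ℝ (⊤ : ℕ∞) (fun p : ℝ × ℝ => v p.1 p.2))
    (hvx_pos : ∀ t ∈ Icc (0 : ℝ) T, ∀ x ∈ Ioi (0 : ℝ), 0 < partialX v t x)
    (hvxx_neg : ∀ t ∈ Icc (0 : ℝ) T, ∀ x ∈ Ioi (0 : ℝ), partialXX v t x < 0)
    (hpde : ∀ t ∈ Ico (0 : ℝ) T, ∀ x ∈ Ioi (0 : ℝ),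
      partialT v t x - lamBar ^ 2 / 2 * (partialX v t x) ^ 2 / partialXX v t x = 0)
    (R : ℝ → ℝ → ℝ)
    (hR : ∀ t x, R t x = -(partialX v t x) / partialXX v t x) :
    (∀ k : ℕ, ∀ t ∈ Ico (0 : ℝ) T, ∀ x ∈ Ioi (0 : ℝ),
        LOp lamBar R ((D1 R)^[k] v) t x = 0) ∧
    (∀ t ∈ Ico (0 : ℝ) T, ∀ x ∈ Ioi (0 : ℝ), LOp lamBar R (D1 R v) t x = 0) ∧
    (∀ t ∈ Ico (0 : ℝ) T, ∀ x ∈ Ioi (0 : ℝ), LOp lamBar R (D1 R (D1 R v)) t x = 0) := by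
  set F : ℝ × ℝ → ℝ := uc v with hFdef
  have hF : ContDiff ℝ (⊤ : ℕ∞) F := hsmooth
  -- conversions between the curried partial derivatives and joint ones
  have hPX : ∀ t x : ℝ, partialX v t x = pX F (t, x) := fun t x =>
    (hasDerivAt_pX (hF.differentiable (by simp) (t, x))).deriv
  have hPT : ∀ t x : ℝ, partialT v t x = pT F (t, x) := fun t x =>
    (hasDerivAt_pT (hF.differentiable (by simp) (t, x))).deriv
  have hPXX : ∀ t x : ℝ, partialXX v t x = pX (pX F) (t, x) := by
    intro t x
    have h1 : (fun y => partialX v t y) = fun y => pX F (t, y) := funext fun y => hPX t y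
    show deriv (fun y => partialX v t y) x = _
    rw [h1]
    exact (hasDerivAt_pX ((contDiff_pX_s7 hF).differentiable (by simp) (t, x))).deriv
  have hNe : ∀ t ∈ Icc (0 : ℝ) T, ∀ x ∈ Ioi (0 : ℝ), pX (pX F) (t, x) ≠ 0 := by
    intro t ht x hx
    rw [← hPXX]
    exact (hvxx_neg t ht x hx).ne
  have hRuc : ∀ t x : ℝ, R t x = RRf F (t, x) := by
    intro t x
    rw [hR, hPX, hPXX]; rfl
  have hVxxC : Continuous (pX (pX F)) := (contDiff_pX_s7 (contDiff_pX_s7 hF)).continuous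
  have hevX : ∀ t x : ℝ, pX (pX F) (t, x) ≠ 0 → ∀ᶠ y in 𝓝 x, pX (pX F) (t, y) ≠ 0 := by
    intro t x h
    exact (hVxxC.comp (Continuous.prodMk_right t)).continuousAt.eventually_ne h
  have hevT : ∀ t x : ℝ, pX (pX F) (t, x) ≠ 0 → ∀ᶠ s in 𝓝 t, pX (pX F) (s, x) ≠ 0 := by
    intro t x h
    exact (hVxxC.comp (Continuous.prodMk_left x)).continuousAt.eventually_ne h
  -- generic conversion lemmas for auxiliary functions w
  have S1 : ∀ w : ℝ → ℝ → ℝ, (∀ q : ℝ × ℝ, pX (pX F) q ≠ 0 → ContDiffAt ℝ (⊤ : ℕ∞) (uc w) q) →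
      ∀ t x : ℝ, pX (pX F) (t, x) ≠ 0 → partialX w t x = pX (uc w) (t, x) := by
    intro w hw t x h
    exact (hasDerivAt_pX ((hw (t, x) h).differentiableAt (by simp))).deriv
  have S2 : ∀ w : ℝ → ℝ → ℝ, (∀ q : ℝ × ℝ, pX (pX F) q ≠ 0 → ContDiffAt ℝ (⊤ : ℕ∞) (uc w) q) →
      ∀ t x : ℝ, pX (pX F) (t, x) ≠ 0 → partialT w t x = pT (uc w) (t, x) := by
    intro w hw t x h
    exact (hasDerivAt_pT ((hw (t, x) h).differentiableAt (by simp))).deriv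
  have S3 : ∀ w : ℝ → ℝ → ℝ, (∀ q : ℝ × ℝ, pX (pX F) q ≠ 0 → ContDiffAt ℝ (⊤ : ℕ∞) (uc w) q) →
      ∀ t x : ℝ, pX (pX F) (t, x) ≠ 0 → partialXX w t x = pX (pX (uc w)) (t, x) := by
    intro w hw t x h
    have heq : (fun y => partialX w t y) =ᶠ[𝓝 x] fun y => pX (uc w) (t, y) := by
      filter_upwards [hevX t x h] with y hy using S1 w hw t y hy
    show deriv (fun y => partialX w t y) x = _
    rw [heq.deriv_eq]
    exact (hasDerivAt_pX ((contDiffAt_pX (hw (t, x) h)).differentiableAt (by simp))).deriv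
  have S4 : ∀ w : ℝ → ℝ → ℝ, (∀ q : ℝ × ℝ, pX (pX F) q ≠ 0 → ContDiffAt ℝ (⊤ : ℕ∞) (uc w) q) →
      ∀ q : ℝ × ℝ, pX (pX F) q ≠ 0 → ContDiffAt ℝ (⊤ : ℕ∞) (uc (D1 R w)) q := by
    intro w hw q hq
    have h1 : ContDiffAt ℝ (⊤ : ℕ∞) (fun q' => RRf F q' * pX (uc w) q') q :=
      (contDiffAt_RRf hF hq).mul (contDiffAt_pX (hw q hq))
    apply h1.congr_of_eventuallyEq
    filter_upwards [hVxxC.continuousAt.eventually_ne hq] with q' hq'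
    show D1 R w q'.1 q'.2 = _
    simp only [D1]
    rw [hRuc q'.1 q'.2, S1 w hw q'.1 q'.2 hq']
  -- the commutation identity
  have COMM : ∀ w : ℝ → ℝ → ℝ, (∀ q : ℝ × ℝ, pX (pX F) q ≠ 0 → ContDiffAt ℝ (⊤ : ℕ∞) (uc w) q) →
      ∀ t x : ℝ, pX (pX F) (t, x) ≠ 0 →
      LOp lamBar R (D1 R w) t x
        = RRf F (t, x) * deriv (fun y => LOp lamBar R w t y) x
          + (RTf F (t, x) + lamBar ^ 2 / 2 * RRf F (t, x) ^ 2 * RXXf F (t, x))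
              * pX (uc w) (t, x) := by
    intro w hw t x hq
    have hWd : DifferentiableAt ℝ (pX (uc w)) (t, x) :=
      (contDiffAt_pX (hw _ hq)).differentiableAt (by simp)
    have hWxd : DifferentiableAt ℝ (pX (pX (uc w))) (t, x) :=
      (contDiffAt_pX (contDiffAt_pX (hw _ hq))).differentiableAt (by simp)
    have hWtd : DifferentiableAt ℝ (pT (uc w)) (t, x) :=
      (contDiffAt_pT (hw _ hq)).differentiableAt (by simp)
    have hi : ∀ t' x' : ℝ, pX (pX F) (t', x') ≠ 0 →
        partialX (D1 R w) t' x' = RXf F (t', x') * pX (uc w) (t', x')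
          + RRf F (t', x') * pX (pX (uc w)) (t', x') := by
      intro t' x' h
      have heq : (fun y => D1 R w t' y) =ᶠ[𝓝 x'] fun y => RRf F (t', y) * pX (uc w) (t', y) := by
        filter_upwards [hevX t' x' h] with y hy
        simp only [D1]
        rw [hRuc t' y, S1 w hw t' y hy]
      have hd : HasDerivAt (fun y => RRf F (t', y) * pX (uc w) (t', y))
          (RXf F (t', x') * pX (uc w) (t', x') + RRf F (t', x') * pX (pX (uc w)) (t', x')) x' :=
        (hasDerivAt_RRf_x hF h).mul
          (hasDerivAt_pX ((contDiffAt_pX (hw _ h)).differentiableAt (by simp)))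
      show deriv (fun y => D1 R w t' y) x' = _
      rw [heq.deriv_eq, hd.deriv]
    have hii : partialT (D1 R w) t x
        = RTf F (t, x) * pX (uc w) (t, x) + RRf F (t, x) * pX (pT (uc w)) (t, x) := by
      have heq : (fun s => D1 R w s x) =ᶠ[𝓝 t] fun s => RRf F (s, x) * pX (uc w) (s, x) := by
        filter_upwards [hevT t x hq] with s hs
        simp only [D1]
        rw [hRuc s x, S1 w hw s x hs]
      have h2 : HasDerivAt (fun s => pX (uc w) (s, x)) (pT (pX (uc w)) (t, x)) t :=
        hasDerivAt_pT hWd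
      rw [pT_pX (hw _ hq)] at h2
      have hd := (hasDerivAt_RRf_t hF hq).mul h2
      show deriv (fun s => D1 R w s x) t = _
      rw [heq.deriv_eq]; exact hd.deriv
    have hiii : partialXX (D1 R w) t x
        = (RXXf F (t, x) * pX (uc w) (t, x) + RXf F (t, x) * pX (pX (uc w)) (t, x))
          + (RXf F (t, x) * pX (pX (uc w)) (t, x)
              + RRf F (t, x) * pX (pX (pX (uc w))) (t, x)) := by
      have heq : (fun y => partialX (D1 R w) t y) =ᶠ[𝓝 x]
          fun y => RXf F (t, y) * pX (uc w) (t, y) + RRf F (t, y) * pX (pX (uc w)) (t, y) := by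
        filter_upwards [hevX t x hq] with y hy using hi t y hy
      have hd := ((hasDerivAt_RXf_x hF hq).mul (hasDerivAt_pX hWd)).add
        ((hasDerivAt_RRf_x hF hq).mul (hasDerivAt_pX hWxd))
      show deriv (fun y => partialX (D1 R w) t y) x = _
      rw [heq.deriv_eq]; exact hd.deriv
    have heqL : (fun y => LOp lamBar R w t y) =ᶠ[𝓝 x]
        fun y => pT (uc w) (t, y) + lamBar ^ 2 / 2 * RRf F (t, y) ^ 2 * pX (pX (uc w)) (t, y)
          + lamBar ^ 2 * RRf F (t, y) * pX (uc w) (t, y) := by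
      filter_upwards [hevX t x hq] with y hy
      simp only [LOp]
      rw [hRuc t y, S1 w hw t y hy, S2 w hw t y hy, S3 w hw t y hy]
    have hdL := ((hasDerivAt_pX hWtd).add
        ((HasDerivAt.const_mul (lamBar ^ 2 / 2) ((hasDerivAt_RRf_x hF hq).pow 2)).mul
          (hasDerivAt_pX hWxd))).add
      ((HasDerivAt.const_mul (lamBar ^ 2) (hasDerivAt_RRf_x hF hq)).mul (hasDerivAt_pX hWd))
    have hdL' : HasDerivAt (fun y => pT (uc w) (t, y) + lamBar ^ 2 / 2 * RRf F (t, y) ^ 2 * pX (pX (uc w)) (t, y) + lamBar ^ 2 * RRf F (t, y) * pX (uc w) (t, y)) _ x := hdL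
    rw [heqL.deriv_eq, hdL'.deriv]
    simp only [LOp, Pi.pow_apply]
    rw [hii, hiii, hi t x hq, hRuc t x]
    push_cast
    ring
  -- the PDE differentiated once in x
  have E1 : ∀ t ∈ Ico (0 : ℝ) T, ∀ x ∈ Ioi (0 : ℝ),
      pX (pT F) (t, x)
        = (lamBar ^ 2 / 2 * (pX (pX F) (t, x) * pX F (t, x) + pX F (t, x) * pX (pX F) (t, x))
              * pX (pX F) (t, x)
            - lamBar ^ 2 / 2 * (pX F (t, x) * pX F (t, x)) * pX (pX (pX F)) (t, x))
          / pX (pX F) (t, x) ^ 2 := by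
    intro t ht x hx
    have hne := hNe t (Ico_subset_Icc_self ht) x hx
    have hL : HasDerivAt (fun y => pT F (t, y)) (pX (pT F) (t, x)) x :=
      hasDerivAt_pX ((contDiff_pT_s7 hF).differentiable (by simp) (t, x))
    have heq : (fun y => pT F (t, y)) =ᶠ[𝓝 x]
        fun y => lamBar ^ 2 / 2 * (pX F (t, y) * pX F (t, y)) / pX (pX F) (t, y) := by
      filter_upwards [isOpen_Ioi.mem_nhds hx] with y hy
      have h := hpde t ht y hy
      rw [hPT, hPX, hPXX, sub_eq_zero] at h
      rw [h]; ring
    have h1 : HasDerivAt (fun y => pX F (t, y)) (pX (pX F) (t, x)) x :=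
      hasDerivAt_pX ((contDiff_pX_s7 hF).differentiable (by simp) (t, x))
    have h2 : HasDerivAt (fun y => pX (pX F) (t, y)) (pX (pX (pX F)) (t, x)) x :=
      hasDerivAt_pX ((contDiff_pX_s7 (contDiff_pX_s7 hF)).differentiable (by simp) (t, x))
    have hRS := (HasDerivAt.const_mul (lamBar ^ 2 / 2) (h1.mul h1)).div h2 hne
    exact (heq.hasDerivAt_iff.mp hL).unique hRS
  -- the key fact : R_t + (λ²/2) R² R_xx = 0
  have KEY : ∀ t ∈ Ico (0 : ℝ) T, ∀ x ∈ Ioi (0 : ℝ),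
      RTf F (t, x) + lamBar ^ 2 / 2 * RRf F (t, x) ^ 2 * RXXf F (t, x) = 0 := by
    intro t ht x hx
    have hne := hNe t (Ico_subset_Icc_self ht) x hx
    have e1 := E1 t ht x hx
    have hL2 : HasDerivAt (fun y => pX (pT F) (t, y)) (pX (pX (pT F)) (t, x)) x :=
      hasDerivAt_pX ((contDiff_pX_s7 (contDiff_pT_s7 hF)).differentiable (by simp) (t, x))
    have heq2 : (fun y => pX (pT F) (t, y)) =ᶠ[𝓝 x] fun y =>
        (lamBar ^ 2 / 2 * (pX (pX F) (t, y) * pX F (t, y) + pX F (t, y) * pX (pX F) (t, y))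
              * pX (pX F) (t, y)
            - lamBar ^ 2 / 2 * (pX F (t, y) * pX F (t, y)) * pX (pX (pX F)) (t, y))
          / pX (pX F) (t, y) ^ 2 := by
      filter_upwards [isOpen_Ioi.mem_nhds hx] with y hy using E1 t ht y hy
    have h1 : HasDerivAt (fun y => pX F (t, y)) (pX (pX F) (t, x)) x :=
      hasDerivAt_pX ((contDiff_pX_s7 hF).differentiable (by simp) (t, x))
    have h2 : HasDerivAt (fun y => pX (pX F) (t, y)) (pX (pX (pX F)) (t, x)) x :=
      hasDerivAt_pX ((contDiff_pX_s7 (contDiff_pX_s7 hF)).differentiable (by simp) (t, x))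
    have h3 : HasDerivAt (fun y => pX (pX (pX F)) (t, y)) (pX (pX (pX (pX F))) (t, x)) x :=
      hasDerivAt_pX ((contDiff_pX_s7 (contDiff_pX_s7 (contDiff_pX_s7 hF))).differentiable (by simp) (t, x))
    have hRS2 := (((HasDerivAt.const_mul (lamBar ^ 2 / 2)
          ((h2.mul h1).add (h1.mul h2))).mul h2).sub
        ((HasDerivAt.const_mul (lamBar ^ 2 / 2) (h1.mul h1)).mul h3)).div
      (h2.pow 2) (pow_ne_zero 2 hne)
    have e2 := (heq2.hasDerivAt_iff.mp hL2).unique hRS2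
    simp only [Pi.pow_apply, Pi.mul_apply, Pi.add_apply, Pi.sub_apply] at e2
    simp only [RTf, RRf, RXXf]
    rw [e1, e2]
    field_simp
    ring
  -- base case
  have BASE : ∀ t ∈ Ico (0 : ℝ) T, ∀ x ∈ Ioi (0 : ℝ), LOp lamBar R v t x = 0 := by
    intro t ht x hx
    have hne : partialXX v t x ≠ 0 := (hvxx_neg t (Ico_subset_Icc_self ht) x hx).ne
    have h := hpde t ht x hx
    rw [sub_eq_zero] at h
    simp only [LOp]
    rw [hR, h]
    field_simp
    ring
  -- smoothness of iterates
  have hsm : ∀ k : ℕ, ∀ q : ℝ × ℝ, pX (pX F) q ≠ 0 → ContDiffAt ℝ (⊤ : ℕ∞) (uc ((D1 R)^[k] v)) q := by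
    intro k
    induction k with
    | zero => intro q hq; exact hF.contDiffAt
    | succ n ih =>
      intro q hq
      rw [Function.iterate_succ_apply']
      exact S4 _ ih q hq
  have MAIN : ∀ k : ℕ, ∀ t ∈ Ico (0 : ℝ) T, ∀ x ∈ Ioi (0 : ℝ),
      LOp lamBar R ((D1 R)^[k] v) t x = 0 := by
    intro k
    induction k with
    | zero => intro t ht x hx; exact BASE t ht x hx
    | succ n ih =>
      intro t ht x hx
      have hq := hNe t (Ico_subset_Icc_self ht) x hx
      rw [Function.iterate_succ_apply']
      rw [COMM ((D1 R)^[n] v) (hsm n) t x hq]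
      have h0 : deriv (fun y => LOp lamBar R ((D1 R)^[n] v) t y) x = 0 := by
        have heq : (fun y => LOp lamBar R ((D1 R)^[n] v) t y) =ᶠ[𝓝 x] fun _ => (0 : ℝ) := by
          filter_upwards [isOpen_Ioi.mem_nhds hx] with y hy using ih t ht y hy
        rw [heq.deriv_eq]
        exact deriv_const x 0
      rw [h0, KEY t ht x hx]
      ring
  refine ⟨MAIN, fun t ht x hx => ?_, fun t ht x hx => ?_⟩
  · simpa using MAIN 1 t ht x hx
  · have h := MAIN 2 t ht x hx
    rwa [show (D1 R)^[2] v = D1 R (D1 R v) by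
      simp [Function.iterate_succ_apply']] at h
end

section
/- Fix T > 0 and λ̄ ∈ ℝ, and let v be a C^∞ function on [0,T] × (0,∞) with ∂_x v > 0 and ∂_x² v < 0 solving the Merton PDE with parameter λ̄; set R = −∂_x v/∂_x² v, D₁ w = R ∂_x w, and L w = ∂_t w + (λ̄²/2) R² ∂_x² w + λ̄² R ∂_x w. Let ρ₁, B ∈ ℝ and define w(t,x) = −(1/2)(T − t) ρ₁ B D₁² v(t,x). Then w satisfies L w = (1/2) ρ₁ B D₁² v on [0,T) × (0,∞), together with the terminal condition w(T,x) = 0 for all x > 0. -/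
open Set

section helpers
variable {u : ℝ → ℝ → ℝ} (h : ContDiff ℝ (⊤ : ℕ∞) (fun p : ℝ × ℝ => u p.1 p.2))
include h

lemma hasDerivAt_sliceX (t x : ℝ) :
    HasDerivAt (fun y => u t y) (partialX u t x) x := by
  have hd : DifferentiableAt ℝ (fun y => u t y) x := by
    have : (fun y => u t y) = (fun p : ℝ × ℝ => u p.1 p.2) ∘ (fun y => (t, y)) := rfl
    rw [this]
    exact (h.differentiable (by simp) (t, x)).comp x
      ((differentiableAt_const t).prodMk differentiableAt_id)
  exact hd.hasDerivAt

lemma hasDerivAt_sliceT (t x : ℝ) :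
    HasDerivAt (fun s => u s x) (partialT u t x) t := by
  have hd : DifferentiableAt ℝ (fun s => u s x) t := by
    have : (fun s => u s x) = (fun p : ℝ × ℝ => u p.1 p.2) ∘ (fun s => (s, x)) := rfl
    rw [this]
    exact (h.differentiable (by simp) (t, x)).comp t
      (differentiableAt_id.prodMk (differentiableAt_const x))
  exact hd.hasDerivAt

lemma partialX_eq_fderiv (t x : ℝ) :
    partialX u t x = fderiv ℝ (fun p : ℝ × ℝ => u p.1 p.2) (t, x) (0, 1) := by
  have h1 : HasDerivAt (fun y => ((t, y) : ℝ × ℝ)) ((0 : ℝ), (1 : ℝ)) x :=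
    (hasDerivAt_const x t).prodMk (hasDerivAt_id x)
  have h2 := ((h.differentiable (by simp) (t, x)).hasFDerivAt).comp_hasDerivAt x h1
  exact ((hasDerivAt_sliceX h t x).unique h2)

lemma partialT_eq_fderiv (t x : ℝ) :
    partialT u t x = fderiv ℝ (fun p : ℝ × ℝ => u p.1 p.2) (t, x) (1, 0) := by
  have h1 : HasDerivAt (fun s => ((s, x) : ℝ × ℝ)) ((1 : ℝ), (0 : ℝ)) t :=
    (hasDerivAt_id t).prodMk (hasDerivAt_const t x)
  have h2 := ((h.differentiable (by simp) (t, x)).hasFDerivAt).comp_hasDerivAt t h1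
  exact ((hasDerivAt_sliceT h t x).unique h2)

lemma contDiff_partialX :
    ContDiff ℝ (⊤ : ℕ∞) (fun p : ℝ × ℝ => partialX u p.1 p.2) := by
  have : (fun p : ℝ × ℝ => partialX u p.1 p.2)
      = fun p : ℝ × ℝ => fderiv ℝ (fun p : ℝ × ℝ => u p.1 p.2) p ((0 : ℝ), (1 : ℝ)) := by
    funext p
    exact partialX_eq_fderiv h p.1 p.2
  rw [this]
  exact (h.fderiv_right (by simp)).clm_apply contDiff_const

lemma contDiff_partialT :
    ContDiff ℝ (⊤ : ℕ∞) (fun p : ℝ × ℝ => partialT u p.1 p.2) := by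
  have : (fun p : ℝ × ℝ => partialT u p.1 p.2)
      = fun p : ℝ × ℝ => fderiv ℝ (fun p : ℝ × ℝ => u p.1 p.2) p ((1 : ℝ), (0 : ℝ)) := by
    funext p
    exact partialT_eq_fderiv h p.1 p.2
  rw [this]
  exact (h.fderiv_right (by simp)).clm_apply contDiff_const

lemma clairaut (t x : ℝ) :
    partialT (partialX u) t x = partialX (partialT u) t x := by
  set F : ℝ × ℝ → ℝ := fun p => u p.1 p.2 with hF
  have hdF : ∀ p, HasFDerivAt F (fderiv ℝ F p) p := fun p =>
    (h.differentiable (by simp) p).hasFDerivAt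
  have hdF2 : HasFDerivAt (fderiv ℝ F) (fderiv ℝ (fderiv ℝ F) (t, x)) (t, x) :=
    (((h.fderiv_right (m := (⊤ : ℕ∞)) (by simp)).differentiable (by simp)) (t, x)).hasFDerivAt
  have hsymm := second_derivative_symmetric hdF hdF2 ((1 : ℝ), (0 : ℝ)) ((0 : ℝ), (1 : ℝ))
  have e1 : partialT (partialX u) t x
      = fderiv ℝ (fderiv ℝ F) (t, x) ((1 : ℝ), (0 : ℝ)) ((0 : ℝ), (1 : ℝ)) := by
    have h1 : HasDerivAt (fun s => ((s, x) : ℝ × ℝ)) ((1 : ℝ), (0 : ℝ)) t :=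
      (hasDerivAt_id t).prodMk (hasDerivAt_const t x)
    have h2 : HasFDerivAt (fun p : ℝ × ℝ => fderiv ℝ F p ((0 : ℝ), (1 : ℝ)))
        ((ContinuousLinearMap.apply ℝ ℝ ((0 : ℝ), (1 : ℝ))).comp
          (fderiv ℝ (fderiv ℝ F) (t, x))) (t, x) :=
      (ContinuousLinearMap.apply ℝ ℝ ((0 : ℝ), (1 : ℝ))).hasFDerivAt.comp (t, x) hdF2
    have h3 := h2.comp_hasDerivAt t h1
    have h4 : (fun s => partialX u s x) = fun s => fderiv ℝ F (s, x) ((0 : ℝ), (1 : ℝ)) := by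
      funext s; exact partialX_eq_fderiv h s x
    show deriv (fun s => partialX u s x) t = _
    rw [h4]
    exact h3.deriv
  have e2 : partialX (partialT u) t x
      = fderiv ℝ (fderiv ℝ F) (t, x) ((0 : ℝ), (1 : ℝ)) ((1 : ℝ), (0 : ℝ)) := by
    have h1 : HasDerivAt (fun y => ((t, y) : ℝ × ℝ)) ((0 : ℝ), (1 : ℝ)) x :=
      (hasDerivAt_const x t).prodMk (hasDerivAt_id x)
    have h2 : HasFDerivAt (fun p : ℝ × ℝ => fderiv ℝ F p ((1 : ℝ), (0 : ℝ)))
        ((ContinuousLinearMap.apply ℝ ℝ ((1 : ℝ), (0 : ℝ))).comp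
          (fderiv ℝ (fderiv ℝ F) (t, x))) (t, x) :=
      (ContinuousLinearMap.apply ℝ ℝ ((1 : ℝ), (0 : ℝ))).hasFDerivAt.comp (t, x) hdF2
    have h3 := h2.comp_hasDerivAt x h1
    have h4 : (fun y => partialT u t y) = fun y => fderiv ℝ F (t, y) ((1 : ℝ), (0 : ℝ)) := by
      funext y; exact partialT_eq_fderiv h t y
    show deriv (fun y => partialT u t y) x = _
    rw [h4]
    exact h3.deriv
  rw [e1, e2, hsymm]

end helpers

set_option maxHeartbeats 2000000 in
/-- The explicit first-order fast-scale correction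
`w(t,x) = −(1/2)(T − t) ρ₁ B D₁² v(t,x)` satisfies `L w = (1/2) ρ₁ B D₁² v` on
`[0,T) × (0,∞)` with terminal condition `w(T,x) = 0`. -/
theorem fast_correction_pde (T lamBar : ℝ) (hT : 0 < T)
    (v : ℝ → ℝ → ℝ)
    (hsmooth : ContDiff ℝ (⊤ : ℕ∞) (fun p : ℝ × ℝ => v p.1 p.2))
    (hvx_pos : ∀ t ∈ Icc (0 : ℝ) T, ∀ x ∈ Ioi (0 : ℝ), 0 < partialX v t x)
    (hvxx_neg : ∀ t ∈ Icc (0 : ℝ) T, ∀ x ∈ Ioi (0 : ℝ), partialXX v t x < 0)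
    (hpde : ∀ t ∈ Ico (0 : ℝ) T, ∀ x ∈ Ioi (0 : ℝ),
      partialT v t x - lamBar ^ 2 / 2 * (partialX v t x) ^ 2 / partialXX v t x = 0)
    (R : ℝ → ℝ → ℝ)
    (hR : ∀ t x, R t x = -(partialX v t x) / partialXX v t x)
    (ρ₁ B : ℝ) (w : ℝ → ℝ → ℝ)
    (hw : ∀ t x, w t x = -(1 / 2) * (T - t) * ρ₁ * B * D1 R (D1 R v) t x) :
    (∀ t ∈ Ico (0 : ℝ) T, ∀ x ∈ Ioi (0 : ℝ),
        LOp lamBar R w t x = 1 / 2 * ρ₁ * B * D1 R (D1 R v) t x) ∧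
    (∀ x ∈ Ioi (0 : ℝ), w T x = 0) := by
  set v1 : ℝ → ℝ → ℝ := partialX v with hv1def
  set v2 : ℝ → ℝ → ℝ := partialX v1 with hv2def
  set v3 : ℝ → ℝ → ℝ := partialX v2 with hv3def
  set v4 : ℝ → ℝ → ℝ := partialX v3 with hv4def
  have hXX : ∀ s y, partialXX v s y = v2 s y := fun _ _ => rfl
  have s1 : ContDiff ℝ (⊤ : ℕ∞) (fun p : ℝ × ℝ => v1 p.1 p.2) := contDiff_partialX hsmooth
  have s2 : ContDiff ℝ (⊤ : ℕ∞) (fun p : ℝ × ℝ => v2 p.1 p.2) := contDiff_partialX s1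
  have s3 : ContDiff ℝ (⊤ : ℕ∞) (fun p : ℝ × ℝ => v3 p.1 p.2) := contDiff_partialX s2
  have s4 : ContDiff ℝ (⊤ : ℕ∞) (fun p : ℝ × ℝ => v4 p.1 p.2) := contDiff_partialX s3
  -- spatial slice derivatives
  have hd1 : ∀ s y, HasDerivAt (fun y' => v1 s y') (v2 s y) y :=
    fun s y => hasDerivAt_sliceX s1 s y
  have hd2 : ∀ s y, HasDerivAt (fun y' => v2 s y') (v3 s y) y :=
    fun s y => hasDerivAt_sliceX s2 s y
  have hd3 : ∀ s y, HasDerivAt (fun y' => v3 s y') (v4 s y) y :=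
    fun s y => hasDerivAt_sliceX s3 s y
  have hd4 : ∀ s y, HasDerivAt (fun y' => v4 s y') (partialX v4 s y) y :=
    fun s y => hasDerivAt_sliceX s4 s y
  -- Clairaut chain
  have c1 : ∀ s y, partialT v1 s y = partialX (partialT v) s y :=
    fun s y => clairaut hsmooth s y
  have c2 : ∀ s y, partialT v2 s y = partialX (partialX (partialT v)) s y := by
    intro s y
    have h1 : partialT v2 s y = partialX (partialT v1) s y := clairaut s1 s y
    rw [h1]
    show deriv (fun y' => partialT v1 s y') y = deriv (fun y' => partialX (partialT v) s y') y
    congr 1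
    funext y'
    exact c1 s y'
  have c3 : ∀ s y, partialT v3 s y = partialX (partialX (partialX (partialT v))) s y := by
    intro s y
    have h1 : partialT v3 s y = partialX (partialT v2) s y := clairaut s2 s y
    rw [h1]
    show deriv (fun y' => partialT v2 s y') y
        = deriv (fun y' => partialX (partialX (partialT v)) s y') y
    congr 1
    funext y'
    exact c2 s y'
  -- the explicit formula for D1 R (D1 R v) wherever v2 ≠ 0
  have hGform : ∀ s y, v2 s y ≠ 0 → D1 R (D1 R v) s y
      = v1 s y ^ 2 * (2 * v2 s y ^ 2 - v1 s y * v3 s y) / v2 s y ^ 3 := by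
    intro s y hne
    have hfun : (fun y' => D1 R v s y') = fun y' => -(v1 s y' ^ 2) / v2 s y' := by
      funext y'
      show R s y' * v1 s y' = _
      rw [hR s y', hXX s y']
      ring
    have e1 := (((hd1 s y).fun_pow 2).fun_neg.fun_div (hd2 s y) hne).deriv
    have e0 : partialX (D1 R v) s y = deriv (fun y' => -(v1 s y' ^ 2) / v2 s y') y := by
      show deriv (fun y' => D1 R v s y') y = _
      rw [hfun]
    show R s y * partialX (D1 R v) s y = _
    rw [e0, e1, hR s y, hXX s y]
    field_simp
    ring
  refine ⟨?_, fun x _ => by rw [hw, sub_self]; ring⟩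
  intro t ht x hx
  have htI : t ∈ Icc (0 : ℝ) T := ⟨ht.1, le_of_lt ht.2⟩
  have h2ne : ∀ y ∈ Ioi (0 : ℝ), v2 t y ≠ 0 := by
    intro y hy
    have h := hvxx_neg t htI y hy
    rw [hXX] at h
    exact ne_of_lt h
  have hxne : v2 t x ≠ 0 := h2ne x hx
  -- PDE on the time slice
  have hVT : ∀ y ∈ Ioi (0 : ℝ),
      partialT v t y = lamBar ^ 2 / 2 * v1 t y ^ 2 / v2 t y := by
    intro y hy
    have h := hpde t ht y hy
    rw [hXX] at h
    linarith
  -- first spatial derivative of ∂ₜv on the slice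
  have hPW1 : ∀ y ∈ Ioi (0 : ℝ), partialX (partialT v) t y
      = lamBar ^ 2 / 2 * (2 * v1 t y * v2 t y ^ 2 - v1 t y ^ 2 * v3 t y) / v2 t y ^ 2 := by
    intro y hy
    have hne := h2ne y hy
    have hev : (fun y' => partialT v t y')
        =ᶠ[nhds y] (fun y' => lamBar ^ 2 / 2 * v1 t y' ^ 2 / v2 t y') := by
      filter_upwards [isOpen_Ioi.mem_nhds hy] with z hz
      exact hVT z hz
    refine (hev.deriv_eq.trans
      ((((hd1 t y).fun_pow 2).const_mul (lamBar ^ 2 / 2)).fun_div (hd2 t y) hne).deriv).trans ?_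
    field_simp
    ring
  -- second spatial derivative of ∂ₜv on the slice
  have hPW2 : ∀ y ∈ Ioi (0 : ℝ), partialX (partialX (partialT v)) t y
      = lamBar ^ 2 / 2 * (2 * v2 t y ^ 4 - 2 * v1 t y * v2 t y ^ 2 * v3 t y
          + 2 * v1 t y ^ 2 * v3 t y ^ 2 - v1 t y ^ 2 * v2 t y * v4 t y) / v2 t y ^ 3 := by
    intro y hy
    have hne := h2ne y hy
    have hev : (fun y' => partialX (partialT v) t y') =ᶠ[nhds y]
        (fun y' => lamBar ^ 2 / 2 * (2 * v1 t y' * v2 t y' ^ 2 - v1 t y' ^ 2 * v3 t y')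
          / v2 t y' ^ 2) := by
      filter_upwards [isOpen_Ioi.mem_nhds hy] with z hz
      exact hPW1 z hz
    refine (hev.deriv_eq.trans
      ((((((hd1 t y).const_mul 2).fun_mul ((hd2 t y).fun_pow 2)).fun_sub
          (((hd1 t y).fun_pow 2).fun_mul (hd3 t y))).const_mul
        (lamBar ^ 2 / 2)).fun_div ((hd2 t y).fun_pow 2) (pow_ne_zero 2 hne)).deriv).trans ?_
    field_simp
    ring
  -- third spatial derivative of ∂ₜv at x (raw value)
  have hev3 : (fun y' => partialX (partialX (partialT v)) t y') =ᶠ[nhds x]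
      (fun y' => lamBar ^ 2 / 2 * (2 * v2 t y' ^ 4 - 2 * v1 t y' * v2 t y' ^ 2 * v3 t y'
          + 2 * v1 t y' ^ 2 * v3 t y' ^ 2 - v1 t y' ^ 2 * v2 t y' * v4 t y')
        / v2 t y' ^ 3) := by
    filter_upwards [isOpen_Ioi.mem_nhds hx] with z hz
    exact hPW2 z hz
  have hb3 := (c3 t x).trans (hev3.deriv_eq.trans
    ((((((((hd2 t x).fun_pow 4).const_mul 2).fun_sub
        ((((hd1 t x).const_mul 2).fun_mul ((hd2 t x).fun_pow 2)).fun_mul (hd3 t x))).fun_add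
        ((((hd1 t x).fun_pow 2).const_mul 2).fun_mul ((hd3 t x).fun_pow 2))).fun_sub
        ((((hd1 t x).fun_pow 2).fun_mul (hd2 t x)).fun_mul (hd4 t x))).const_mul
      (lamBar ^ 2 / 2)).fun_div ((hd2 t x).fun_pow 3) (pow_ne_zero 3 hxne)).deriv)
  have hb1 : partialT v1 t x
      = lamBar ^ 2 / 2 * (2 * v1 t x * v2 t x ^ 2 - v1 t x ^ 2 * v3 t x) / v2 t x ^ 2 :=
    (c1 t x).trans (hPW1 x hx)
  have hb2 : partialT v2 t x
      = lamBar ^ 2 / 2 * (2 * v2 t x ^ 4 - 2 * v1 t x * v2 t x ^ 2 * v3 t x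
          + 2 * v1 t x ^ 2 * v3 t x ^ 2 - v1 t x ^ 2 * v2 t x * v4 t x) / v2 t x ^ 3 :=
    (c2 t x).trans (hPW2 x hx)
  -- spatial derivative of w on the slice
  have hwx : ∀ y ∈ Ioi (0 : ℝ), partialX w t y
      = -(1 / 2) * (T - t) * ρ₁ * B *
        ((4 * v1 t y * v2 t y ^ 4 - 5 * v1 t y ^ 2 * v2 t y ^ 2 * v3 t y
          + 3 * v1 t y ^ 3 * v3 t y ^ 2 - v1 t y ^ 3 * v2 t y * v4 t y) / v2 t y ^ 4) := by
    intro y hy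
    have hne := h2ne y hy
    have hev : (fun y' => w t y') =ᶠ[nhds y]
        (fun y' => -(1 / 2) * (T - t) * ρ₁ * B *
          (v1 t y' ^ 2 * (2 * v2 t y' ^ 2 - v1 t y' * v3 t y') / v2 t y' ^ 3)) := by
      filter_upwards [isOpen_Ioi.mem_nhds hy] with z hz
      rw [hw, hGform t z (h2ne z hz)]
    refine (hev.deriv_eq.trans
      (((((hd1 t y).fun_pow 2).fun_mul ((((hd2 t y).fun_pow 2).const_mul 2).fun_sub
          ((hd1 t y).fun_mul (hd3 t y)))).fun_div ((hd2 t y).fun_pow 3)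
          (pow_ne_zero 3 hne)).const_mul (-(1 / 2) * (T - t) * ρ₁ * B)).deriv).trans ?_
    field_simp
    ring
  -- second spatial derivative of w at x
  have hev2 : (fun y' => partialX w t y') =ᶠ[nhds x]
      (fun y' => -(1 / 2) * (T - t) * ρ₁ * B *
        ((4 * v1 t y' * v2 t y' ^ 4 - 5 * v1 t y' ^ 2 * v2 t y' ^ 2 * v3 t y'
          + 3 * v1 t y' ^ 3 * v3 t y' ^ 2 - v1 t y' ^ 3 * v2 t y' * v4 t y')
          / v2 t y' ^ 4)) := by
    filter_upwards [isOpen_Ioi.mem_nhds hx] with z hz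
    exact hwx z hz
  have hwxx := hev2.deriv_eq.trans
    ((((((((hd1 t x).const_mul 4).fun_mul ((hd2 t x).fun_pow 4)).fun_sub
        (((((hd1 t x).fun_pow 2).const_mul 5).fun_mul ((hd2 t x).fun_pow 2)).fun_mul (hd3 t x))).fun_add
        ((((hd1 t x).fun_pow 3).const_mul 3).fun_mul ((hd3 t x).fun_pow 2))).fun_sub
        ((((hd1 t x).fun_pow 3).fun_mul (hd2 t x)).fun_mul (hd4 t x))).fun_div ((hd2 t x).fun_pow 4)
        (pow_ne_zero 4 hxne)).const_mul (-(1 / 2) * (T - t) * ρ₁ * B)).deriv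
  -- time derivative of w at x
  have hct : ContinuousAt (fun s => v2 s x) t := by
    have hcc : Continuous (fun p : ℝ × ℝ => v2 p.1 p.2) := s2.continuous
    exact (hcc.comp (continuous_id.prodMk continuous_const)).continuousAt
  have hevne : ∀ᶠ s in nhds t, v2 s x ≠ 0 := hct.eventually_ne hxne
  have ht1 : HasDerivAt (fun s => v1 s x) (partialT v1 t x) t := hasDerivAt_sliceT s1 t x
  have ht2 : HasDerivAt (fun s => v2 s x) (partialT v2 t x) t := hasDerivAt_sliceT s2 t x
  have ht3 : HasDerivAt (fun s => v3 s x) (partialT v3 t x) t := hasDerivAt_sliceT s3 t x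
  have hevG : (fun s => D1 R (D1 R v) s x) =ᶠ[nhds t]
      (fun s => v1 s x ^ 2 * (2 * v2 s x ^ 2 - v1 s x * v3 s x) / v2 s x ^ 3) := by
    filter_upwards [hevne] with s hs
    exact hGform s x hs
  have hgT := (((ht1.fun_pow 2).fun_mul (((ht2.fun_pow 2).const_mul 2).fun_sub (ht1.fun_mul ht3))).fun_div
      (ht2.fun_pow 3) (pow_ne_zero 3 hxne)).congr_of_eventuallyEq hevG
  have hc := ((((hasDerivAt_const t T).fun_sub (hasDerivAt_id' (x := t))).const_mul
      (-(1 / 2) : ℝ)).mul_const ρ₁).mul_const B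
  have hwT := (hc.fun_mul hgT).congr_of_eventuallyEq
    (Filter.Eventually.of_forall fun s => hw s x)
  -- assemble
  show partialT w t x + lamBar ^ 2 / 2 * R t x ^ 2 * partialXX w t x
      + lamBar ^ 2 * R t x * partialX w t x = 1 / 2 * ρ₁ * B * D1 R (D1 R v) t x
  rw [show partialT w t x = deriv (fun s => w s x) t from rfl, hwT.deriv,
    show partialXX w t x = deriv (fun y' => partialX w t y') x from rfl, hwxx,
    hwx x hx, hb1, hb2, hb3, hR t x, hXX t x]
  field_simp
  ring
end

section
/- Fix T > 0 and let M : [0,T] × (0,∞) × ℝ → ℝ, written M(t,x;λ), be smooth in all variables (with continuous and equal mixed partials to the orders appearing), with ∂_x M > 0 and ∂_x² M < 0, such that for each λ ∈ ℝ, M(·,·;λ) solves the Merton PDE with parameter λ and M(T,x;λ) = U(x) for a function U independent of λ. Set R = −∂_x M/∂_x² M, D₁ w = R ∂_x w, and L_{t,x}(λ) w = ∂_t w + (λ²/2) R² ∂_x² w + λ² R ∂_x w. Then for each λ, the function w(t,x) := ∂_λ M(t,x;λ) − (T − t) λ D₁ M(t,x;λ) satisfies L_{t,x}(λ) w = 0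 on [0,T) × (0,∞) with w(T,x) = 0 for all x > 0. Consequently, if for each λ the zero function is the only such solution of the terminal-value problem L_{t,x}(λ) w = 0, w(T,·) = 0, then the Vega–Gamma relation ∂_λ M = (T − t) λ D₁ M holds. -/
open Set

noncomputable def pdd (u : ℝ × ℝ × ℝ) (G : ℝ × ℝ × ℝ → ℝ) : ℝ × ℝ × ℝ → ℝ :=
  fun p => fderiv ℝ G p u

lemma contDiff_pdd (u : ℝ × ℝ × ℝ) {G : ℝ × ℝ × ℝ → ℝ} (hG : ContDiff ℝ (⊤ : ℕ∞) G) :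
    ContDiff ℝ (⊤ : ℕ∞) (pdd u G) := by
  have h1 : ContDiff ℝ (⊤ : ℕ∞) (fderiv ℝ G) := hG.fderiv_right (by simp)
  exact (ContinuousLinearMap.apply ℝ ℝ u).contDiff.comp h1

lemma pdd_comm {G : ℝ × ℝ × ℝ → ℝ} (hG : ContDiff ℝ (⊤ : ℕ∞) G) (u v : ℝ × ℝ × ℝ)
    (p : ℝ × ℝ × ℝ) : pdd u (pdd v G) p = pdd v (pdd u G) p := by
  have hd : ∀ y, HasFDerivAt G (fderiv ℝ G y) y := fun y =>
    (hG.differentiable (by simp) y).hasFDerivAt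
  have h1 : ContDiff ℝ (⊤ : ℕ∞) (fderiv ℝ G) := hG.fderiv_right (by simp)
  have h2 : HasFDerivAt (fderiv ℝ G) (fderiv ℝ (fderiv ℝ G) p) p :=
    (h1.differentiable (by simp) p).hasFDerivAt
  have hsym := second_derivative_symmetric hd h2
  have key : ∀ a b : ℝ × ℝ × ℝ, pdd a (pdd b G) p = fderiv ℝ (fderiv ℝ G) p a b := by
    intro a b
    have h3 : HasFDerivAt (fun q => fderiv ℝ G q b)
        ((ContinuousLinearMap.apply ℝ ℝ b).comp (fderiv ℝ (fderiv ℝ G) p)) p :=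
      (ContinuousLinearMap.apply ℝ ℝ b).hasFDerivAt.comp p h2
    rw [show (fun q => (fderiv ℝ G q) b) = pdd b G from rfl] at h3
    show fderiv ℝ (pdd b G) p a = _
    rw [h3.fderiv]
    rfl
  rw [key u v, key v u, hsym v u]

noncomputable def DT (G : ℝ × ℝ × ℝ → ℝ) : ℝ × ℝ × ℝ → ℝ := pdd (1, 0, 0) G
noncomputable def DX (G : ℝ × ℝ × ℝ → ℝ) : ℝ × ℝ × ℝ → ℝ := pdd (0, 1, 0) G
noncomputable def DL (G : ℝ × ℝ × ℝ → ℝ) : ℝ × ℝ × ℝ → ℝ := pdd (0, 0, 1) G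

lemma contDiff_DT {G : ℝ × ℝ × ℝ → ℝ} (hG : ContDiff ℝ (⊤ : ℕ∞) G) : ContDiff ℝ (⊤ : ℕ∞) (DT G) :=
  contDiff_pdd _ hG
lemma contDiff_DX {G : ℝ × ℝ × ℝ → ℝ} (hG : ContDiff ℝ (⊤ : ℕ∞) G) : ContDiff ℝ (⊤ : ℕ∞) (DX G) :=
  contDiff_pdd _ hG
lemma contDiff_DL {G : ℝ × ℝ × ℝ → ℝ} (hG : ContDiff ℝ (⊤ : ℕ∞) G) : ContDiff ℝ (⊤ : ℕ∞) (DL G) :=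
  contDiff_pdd _ hG

lemma DTX_comm {G : ℝ × ℝ × ℝ → ℝ} (hG : ContDiff ℝ (⊤ : ℕ∞) G) (q : ℝ × ℝ × ℝ) :
    DT (DX G) q = DX (DT G) q := pdd_comm hG _ _ q
lemma DTL_comm {G : ℝ × ℝ × ℝ → ℝ} (hG : ContDiff ℝ (⊤ : ℕ∞) G) (q : ℝ × ℝ × ℝ) :
    DT (DL G) q = DL (DT G) q := pdd_comm hG _ _ q
lemma DLX_comm {G : ℝ × ℝ × ℝ → ℝ} (hG : ContDiff ℝ (⊤ : ℕ∞) G) (q : ℝ × ℝ × ℝ) :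
    DL (DX G) q = DX (DL G) q := pdd_comm hG _ _ q

lemma hasDerivAt_sliceT_s9 {G : ℝ × ℝ × ℝ → ℝ} (hG : ContDiff ℝ (⊤ : ℕ∞) G) (t x l : ℝ) :
    HasDerivAt (fun s => G (s, x, l)) (DT G (t, x, l)) t := by
  have hin : HasDerivAt (fun s : ℝ => (s, x, l) : ℝ → ℝ × ℝ × ℝ) (1, 0, 0) t :=
    (hasDerivAt_id t).prodMk ((hasDerivAt_const t x).prodMk (hasDerivAt_const t l))
  exact (hG.differentiable (by simp) (t, x, l)).hasFDerivAt.comp_hasDerivAt t hin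

lemma hasDerivAt_sliceX_s9 {G : ℝ × ℝ × ℝ → ℝ} (hG : ContDiff ℝ (⊤ : ℕ∞) G) (t x l : ℝ) :
    HasDerivAt (fun y => G (t, y, l)) (DX G (t, x, l)) x := by
  have hin : HasDerivAt (fun y : ℝ => (t, y, l) : ℝ → ℝ × ℝ × ℝ) (0, 1, 0) x :=
    (hasDerivAt_const x t).prodMk ((hasDerivAt_id x).prodMk (hasDerivAt_const x l))
  exact (hG.differentiable (by simp) (t, x, l)).hasFDerivAt.comp_hasDerivAt x hin

lemma hasDerivAt_sliceL {G : ℝ × ℝ × ℝ → ℝ} (hG : ContDiff ℝ (⊤ : ℕ∞) G) (t x l : ℝ) :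
    HasDerivAt (fun m => G (t, x, m)) (DL G (t, x, l)) l := by
  have hin : HasDerivAt (fun m : ℝ => (t, x, m) : ℝ → ℝ × ℝ × ℝ) (0, 0, 1) l :=
    (hasDerivAt_const l t).prodMk ((hasDerivAt_const l x).prodMk (hasDerivAt_id l))
  exact (hG.differentiable (by simp) (t, x, l)).hasFDerivAt.comp_hasDerivAt l hin

set_option maxHeartbeats 1600000 in
/-- Vega–Gamma relation: for the smooth family `M(t,x;λ)` of Merton value functions with
`λ`-independent terminal data `U`, the function `w = ∂_λ M − (T − t) λ D₁ M` solves
`L_{t,x}(λ) w = 0` with `w(T,·) = 0`; consequently, if the zero function is the only such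
solution of this terminal-value problem, then `∂_λ M = (T − t) λ D₁ M`. -/
theorem vega_gamma (T : ℝ) (hT : 0 < T)
    (M : ℝ → ℝ → ℝ → ℝ) (U : ℝ → ℝ)
    (hsmooth : ContDiff ℝ (⊤ : ℕ∞) (fun p : ℝ × ℝ × ℝ => M p.1 p.2.1 p.2.2))
    (hMx_pos : ∀ lam : ℝ, ∀ t ∈ Icc (0 : ℝ) T, ∀ x ∈ Ioi (0 : ℝ),
      0 < partialX (fun t' x' => M t' x' lam) t x)
    (hMxx_neg : ∀ lam : ℝ, ∀ t ∈ Icc (0 : ℝ) T, ∀ x ∈ Ioi (0 : ℝ),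
      partialXX (fun t' x' => M t' x' lam) t x < 0)
    (hpde : ∀ lam : ℝ, ∀ t ∈ Ico (0 : ℝ) T, ∀ x ∈ Ioi (0 : ℝ),
      partialT (fun t' x' => M t' x' lam) t x
        - lam ^ 2 / 2 * (partialX (fun t' x' => M t' x' lam) t x) ^ 2
            / partialXX (fun t' x' => M t' x' lam) t x = 0)
    (hterm : ∀ lam : ℝ, ∀ x ∈ Ioi (0 : ℝ), M T x lam = U x)
    (R : ℝ → ℝ → ℝ → ℝ)
    (hR : ∀ t x lam, R t x lam = -(partialX (fun t' x' => M t' x' lam) t x)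
        / partialXX (fun t' x' => M t' x' lam) t x)
    (w : ℝ → ℝ → ℝ → ℝ)
    (hw : ∀ t x lam, w t x lam = deriv (fun l => M t x l) lam
        - (T - t) * lam * (R t x lam * partialX (fun t' x' => M t' x' lam) t x)) :
    (∀ lam : ℝ,
      (∀ t ∈ Ico (0 : ℝ) T, ∀ x ∈ Ioi (0 : ℝ),
        LOp lam (fun t' x' => R t' x' lam) (fun t' x' => w t' x' lam) t x = 0) ∧
      (∀ x ∈ Ioi (0 : ℝ), w T x lam = 0)) ∧
    ((∀ lam : ℝ, ∀ u : ℝ → ℝ → ℝ,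
        (∀ t ∈ Ico (0 : ℝ) T, ∀ x ∈ Ioi (0 : ℝ),
          LOp lam (fun t' x' => R t' x' lam) u t x = 0) →
        (∀ x ∈ Ioi (0 : ℝ), u T x = 0) →
        (∀ t ∈ Icc (0 : ℝ) T, ∀ x ∈ Ioi (0 : ℝ), u t x = 0)) →
      ∀ lam : ℝ, ∀ t ∈ Icc (0 : ℝ) T, ∀ x ∈ Ioi (0 : ℝ),
        deriv (fun l => M t x l) lam
          = (T - t) * lam * (R t x lam * partialX (fun t' x' => M t' x' lam) t x)) := by
  set F : ℝ × ℝ × ℝ → ℝ := fun p => M p.1 p.2.1 p.2.2 with hFdef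
  have hFc : ContDiff ℝ (⊤ : ℕ∞) F := hsmooth
  -- conversions between the slice partials and the pdd operators
  have cX : ∀ (a b l : ℝ), partialX (fun t' x' => M t' x' l) a b = DX F (a, b, l) :=
    fun a b l => (hasDerivAt_sliceX_s9 hFc a b l).deriv
  have cT : ∀ (a b l : ℝ), partialT (fun t' x' => M t' x' l) a b = DT F (a, b, l) :=
    fun a b l => (hasDerivAt_sliceT_s9 hFc a b l).deriv
  have cL : ∀ (a b l : ℝ), deriv (fun m => M a b m) l = DL F (a, b, l) :=
    fun a b l => (hasDerivAt_sliceL hFc a b l).deriv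
  have cXX : ∀ (a b l : ℝ), partialXX (fun t' x' => M t' x' l) a b = DX (DX F) (a, b, l) := by
    intro a b l
    have h1 : (fun y => partialX (fun t' x' => M t' x' l) a y) = fun y => DX F (a, y, l) :=
      funext fun y => cX a y l
    show deriv (fun y => partialX (fun t' x' => M t' x' l) a y) b = _
    rw [h1]
    exact (hasDerivAt_sliceX_s9 (contDiff_DX hFc) a b l).deriv
  have hne : ∀ (l : ℝ), ∀ t ∈ Icc (0 : ℝ) T, ∀ x ∈ Ioi (0 : ℝ),
      DX (DX F) (t, x, l) ≠ 0 := by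
    intro l t ht x hx
    have h := hMxx_neg l t ht x hx
    rw [cXX] at h
    exact h.ne
  have hpde' : ∀ (l : ℝ), ∀ t ∈ Ico (0 : ℝ) T, ∀ x ∈ Ioi (0 : ℝ),
      DT F (t, x, l) = l ^ 2 / 2 * DX F (t, x, l) ^ 2 / DX (DX F) (t, x, l) := by
    intro l t ht x hx
    have h := hpde l t ht x hx
    rw [cT, cX, cXX] at h
    linarith
  have hwfun : ∀ (a b c : ℝ), w a b c
      = DL F (a, b, c) - (T - a) * c * (-DX F (a, b, c) ^ 2 / DX (DX F) (a, b, c)) := by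
    intro a b c
    rw [hw a b c, hR a b c, cL, cX, cXX]
    ring
  have part1 : ∀ lam : ℝ,
      (∀ t ∈ Ico (0 : ℝ) T, ∀ x ∈ Ioi (0 : ℝ),
        LOp lam (fun t' x' => R t' x' lam) (fun t' x' => w t' x' lam) t x = 0) ∧
      (∀ x ∈ Ioi (0 : ℝ), w T x lam = 0) := by
    intro lam
    constructor
    · intro t ht x hx
      have htc : t ∈ Icc (0 : ℝ) T := ⟨ht.1, ht.2.le⟩
      have hneL : ∀ y ∈ Ioi (0 : ℝ), DX (DX F) (t, y, lam) ≠ 0 :=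
        fun y hy => hne lam t htc y hy
      have hnep : DX (DX F) (t, x, lam) ≠ 0 := hneL x hx
      -- x-direction slices
      have sX1 : ∀ y : ℝ, HasDerivAt (fun y' => DX F (t, y', lam))
          (DX (DX F) (t, y, lam)) y :=
        fun y => hasDerivAt_sliceX_s9 (contDiff_DX hFc) t y lam
      have sX2 : ∀ y : ℝ, HasDerivAt (fun y' => DX (DX F) (t, y', lam))
          (DX (DX (DX F)) (t, y, lam)) y :=
        fun y => hasDerivAt_sliceX_s9 (contDiff_DX (contDiff_DX hFc)) t y lam
      have sX3 : ∀ y : ℝ, HasDerivAt (fun y' => DX (DX (DX F)) (t, y', lam))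
          (DX (DX (DX (DX F))) (t, y, lam)) y :=
        fun y => hasDerivAt_sliceX_s9 (contDiff_DX (contDiff_DX (contDiff_DX hFc))) t y lam
      have sH0 : ∀ y : ℝ, HasDerivAt (fun y' => DL F (t, y', lam))
          (DX (DL F) (t, y, lam)) y :=
        fun y => hasDerivAt_sliceX_s9 (contDiff_DL hFc) t y lam
      have sH1 : ∀ y : ℝ, HasDerivAt (fun y' => DX (DL F) (t, y', lam))
          (DX (DX (DL F)) (t, y, lam)) y :=
        fun y => hasDerivAt_sliceX_s9 (contDiff_DX (contDiff_DL hFc)) t y lam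
      have sTT : ∀ y : ℝ, HasDerivAt (fun y' => DT F (t, y', lam))
          (DX (DT F) (t, y, lam)) y :=
        fun y => hasDerivAt_sliceX_s9 (contDiff_DT hFc) t y lam
      have sC1 : ∀ y : ℝ, HasDerivAt (fun y' => DX (DT F) (t, y', lam))
          (DX (DX (DT F)) (t, y, lam)) y :=
        fun y => hasDerivAt_sliceX_s9 (contDiff_DX (contDiff_DT hFc)) t y lam
      -- first x-derivative of the PDE
      have hc1fun : ∀ y ∈ Ioi (0 : ℝ), DX (DT F) (t, y, lam)
          = lam ^ 2 / 2 * (2 * DX F (t, y, lam) * DX (DX F) (t, y, lam) * DX (DX F) (t, y, lam)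
              - DX F (t, y, lam) ^ 2 * DX (DX (DX F)) (t, y, lam)) / DX (DX F) (t, y, lam) ^ 2 := by
        intro y hy
        have hyne := hneL y hy
        have hev : (fun y' => DT F (t, y', lam)) =ᶠ[nhds y]
            (fun y' => lam ^ 2 / 2 * DX F (t, y', lam) ^ 2 / DX (DX F) (t, y', lam)) :=
          Filter.eventuallyEq_of_mem (Ioi_mem_nhds hy) (fun z hz => hpde' lam t ht z hz)
        have hcomb := (((sX1 y).pow 2).const_mul (lam ^ 2 / 2)).div (sX2 y) hyne
        rw [← (sTT y).deriv, hev.deriv_eq]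
        refine hcomb.deriv.trans ?_
        simp only [Pi.pow_apply, Pi.mul_apply, Pi.sub_apply, Pi.neg_apply, Pi.div_apply]
        field_simp
        ring
      have hc1 : DT (DX F) (t, x, lam)
          = lam ^ 2 / 2 * (2 * DX F (t, x, lam) * DX (DX F) (t, x, lam) * DX (DX F) (t, x, lam)
              - DX F (t, x, lam) ^ 2 * DX (DX (DX F)) (t, x, lam)) / DX (DX F) (t, x, lam) ^ 2 := by
        rw [DTX_comm hFc (t, x, lam)]
        exact hc1fun x hx
      -- second x-derivative of the PDE
      have sw2 : DT (DX (DX F)) (t, x, lam) = DX (DX (DT F)) (t, x, lam) := by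
        rw [DTX_comm (contDiff_DX hFc) (t, x, lam)]
        have h : DT (DX F) = DX (DT F) := funext fun q => DTX_comm hFc q
        rw [h]
      have hc2 : DT (DX (DX F)) (t, x, lam) = lam ^ 2 / 2 *
          ((2 * DX (DX F) (t, x, lam) ^ 3
              + 2 * DX F (t, x, lam) * DX (DX F) (t, x, lam) * DX (DX (DX F)) (t, x, lam)
              - DX F (t, x, lam) ^ 2 * DX (DX (DX (DX F))) (t, x, lam)) * DX (DX F) (t, x, lam)
            - 2 * DX (DX (DX F)) (t, x, lam) * (2 * DX F (t, x, lam) * DX (DX F) (t, x, lam) ^ 2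
              - DX F (t, x, lam) ^ 2 * DX (DX (DX F)) (t, x, lam))) / DX (DX F) (t, x, lam) ^ 3 := by
        rw [sw2]
        have hev : (fun y => DX (DT F) (t, y, lam)) =ᶠ[nhds x] (fun y =>
            lam ^ 2 / 2 * (2 * DX F (t, y, lam) * DX (DX F) (t, y, lam) * DX (DX F) (t, y, lam)
              - DX F (t, y, lam) ^ 2 * DX (DX (DX F)) (t, y, lam)) / DX (DX F) (t, y, lam) ^ 2) :=
          Filter.eventuallyEq_of_mem (Ioi_mem_nhds hx) (fun z hz => hc1fun z hz)
        have hnum := ((((sX1 x).const_mul 2).mul (sX2 x)).mul (sX2 x)).sub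
          (((sX1 x).pow 2).mul (sX3 x))
        have hcomb := (hnum.const_mul (lam ^ 2 / 2)).div ((sX2 x).pow 2) (pow_ne_zero 2 hnep)
        rw [← (sC1 x).deriv, hev.deriv_eq]
        refine hcomb.deriv.trans ?_
        simp only [Pi.pow_apply, Pi.mul_apply, Pi.sub_apply, Pi.neg_apply, Pi.div_apply]
        field_simp
        ring
      -- lambda-derivative of the PDE
      have hfunL : (fun m => DT F (t, x, m))
          = (fun m => m ^ 2 / 2 * DX F (t, x, m) ^ 2 / DX (DX F) (t, x, m)) :=
        funext fun m => hpde' m t ht x hx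
      have sL1 : HasDerivAt (fun m => DX F (t, x, m)) (DL (DX F) (t, x, lam)) lam :=
        hasDerivAt_sliceL (contDiff_DX hFc) t x lam
      have sL2 : HasDerivAt (fun m => DX (DX F) (t, x, m)) (DL (DX (DX F)) (t, x, lam)) lam :=
        hasDerivAt_sliceL (contDiff_DX (contDiff_DX hFc)) t x lam
      have swA : DL (DX F) (t, x, lam) = DX (DL F) (t, x, lam) := DLX_comm hFc (t, x, lam)
      have swB : DL (DX (DX F)) (t, x, lam) = DX (DX (DL F)) (t, x, lam) := by
        rw [DLX_comm (contDiff_DX hFc) (t, x, lam)]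
        have h : DL (DX F) = DX (DL F) := funext fun q => DLX_comm hFc q
        rw [h]
      have hc0 : DT (DL F) (t, x, lam)
          = lam * DX F (t, x, lam) ^ 2 / DX (DX F) (t, x, lam)
          + lam ^ 2 / 2 * (2 * DX F (t, x, lam) * DX (DL F) (t, x, lam) * DX (DX F) (t, x, lam)
              - DX F (t, x, lam) ^ 2 * DX (DX (DL F)) (t, x, lam)) / DX (DX F) (t, x, lam) ^ 2 := by
        rw [DTL_comm hFc (t, x, lam)]
        have hm := (hasDerivAt_pow 2 lam).div_const 2
        have hcomb := (hm.mul (sL1.pow 2)).div sL2 hnep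
        rw [← (hasDerivAt_sliceL (contDiff_DT hFc) t x lam).deriv, hfunL]
        refine hcomb.deriv.trans ?_
        simp only [Pi.pow_apply, Pi.mul_apply, Pi.sub_apply, Pi.neg_apply, Pi.div_apply]
        rw [swA, swB]
        field_simp
        ring
      -- time derivative of w
      have sT0 : HasDerivAt (fun s => DL F (s, x, lam)) (DT (DL F) (t, x, lam)) t :=
        hasDerivAt_sliceT_s9 (contDiff_DL hFc) t x lam
      have sT1 : HasDerivAt (fun s => DX F (s, x, lam)) (DT (DX F) (t, x, lam)) t :=
        hasDerivAt_sliceT_s9 (contDiff_DX hFc) t x lam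
      have sT2 : HasDerivAt (fun s => DX (DX F) (s, x, lam)) (DT (DX (DX F)) (t, x, lam)) t :=
        hasDerivAt_sliceT_s9 (contDiff_DX (contDiff_DX hFc)) t x lam
      have hqT := ((sT1.pow 2).neg.div sT2 hnep)
      have hTs : HasDerivAt (fun s : ℝ => (T - s) * lam) (-1 * lam) t :=
        ((hasDerivAt_id t).const_sub T).mul_const lam
      have bigT := sT0.sub (hTs.mul hqT)
      have eT : partialT (fun t' x' => w t' x' lam) t x = DT (DL F) (t, x, lam)
          + lam * (-DX F (t, x, lam) ^ 2 / DX (DX F) (t, x, lam))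
          - (T - t) * lam * ((-(2 * DX F (t, x, lam) * DT (DX F) (t, x, lam)) * DX (DX F) (t, x, lam)
              + DX F (t, x, lam) ^ 2 * DT (DX (DX F)) (t, x, lam)) / DX (DX F) (t, x, lam) ^ 2) := by
        show deriv (fun s => w s x lam) t = _
        simp only [hwfun]
        refine bigT.deriv.trans ?_
        simp only [Pi.pow_apply, Pi.mul_apply, Pi.sub_apply, Pi.neg_apply, Pi.div_apply]
        ring
      -- first x-derivative of w
      have hXfun : ∀ y ∈ Ioi (0 : ℝ), deriv (fun y' => w t y' lam) y
          = DX (DL F) (t, y, lam) - (T - t) * lam *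
            (-(2 * DX F (t, y, lam) * DX (DX F) (t, y, lam) * DX (DX F) (t, y, lam)
              - DX F (t, y, lam) ^ 2 * DX (DX (DX F)) (t, y, lam)) / DX (DX F) (t, y, lam) ^ 2) := by
        intro y hy
        have hyne := hneL y hy
        have bigX := (sH0 y).sub
          ((((sX1 y).pow 2).neg.div (sX2 y) hyne).const_mul ((T - t) * lam))
        simp only [hwfun]
        refine bigX.deriv.trans ?_
        simp only [Pi.pow_apply, Pi.mul_apply, Pi.sub_apply, Pi.neg_apply, Pi.div_apply]
        ring
      have eX : partialX (fun t' x' => w t' x' lam) t x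
          = DX (DL F) (t, x, lam) - (T - t) * lam *
            (-(2 * DX F (t, x, lam) * DX (DX F) (t, x, lam) * DX (DX F) (t, x, lam)
              - DX F (t, x, lam) ^ 2 * DX (DX (DX F)) (t, x, lam)) / DX (DX F) (t, x, lam) ^ 2) :=
        hXfun x hx
      -- second x-derivative of w
      have eXX : partialXX (fun t' x' => w t' x' lam) t x
          = DX (DX (DL F)) (t, x, lam) - (T - t) * lam *
            (-((2 * DX (DX F) (t, x, lam) ^ 3
                + 2 * DX F (t, x, lam) * DX (DX F) (t, x, lam) * DX (DX (DX F)) (t, x, lam)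
                - DX F (t, x, lam) ^ 2 * DX (DX (DX (DX F))) (t, x, lam)) * DX (DX F) (t, x, lam)
              - 2 * DX (DX (DX F)) (t, x, lam) * (2 * DX F (t, x, lam) * DX (DX F) (t, x, lam) ^ 2
                - DX F (t, x, lam) ^ 2 * DX (DX (DX F)) (t, x, lam)))
              / DX (DX F) (t, x, lam) ^ 3) := by
        show deriv (fun y => deriv (fun y' => w t y' lam) y) x = _
        have hev : (fun y => deriv (fun y' => w t y' lam) y) =ᶠ[nhds x] (fun y =>
            DX (DL F) (t, y, lam) - (T - t) * lam *
              (-(2 * DX F (t, y, lam) * DX (DX F) (t, y, lam) * DX (DX F) (t, y, lam)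
                - DX F (t, y, lam) ^ 2 * DX (DX (DX F)) (t, y, lam))
                / DX (DX F) (t, y, lam) ^ 2)) :=
          Filter.eventuallyEq_of_mem (Ioi_mem_nhds hx) (fun z hz => hXfun z hz)
        have hnum := ((((sX1 x).const_mul 2).mul (sX2 x)).mul (sX2 x)).sub
          (((sX1 x).pow 2).mul (sX3 x))
        have big := (sH1 x).sub
          ((hnum.neg.div ((sX2 x).pow 2) (pow_ne_zero 2 hnep)).const_mul ((T - t) * lam))
        rw [hev.deriv_eq]
        refine big.deriv.trans ?_
        simp only [Pi.pow_apply, Pi.mul_apply, Pi.sub_apply, Pi.neg_apply, Pi.div_apply]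
        field_simp
        ring
      have eR : R t x lam = -DX F (t, x, lam) / DX (DX F) (t, x, lam) := by
        rw [hR t x lam, cX, cXX]
      show LOp lam (fun t' x' => R t' x' lam) (fun t' x' => w t' x' lam) t x = 0
      simp only [LOp]
      rw [eT, eX, eXX, eR, hc0, hc1, hc2]
      field_simp
      ring
    · intro x hx
      have hU : (fun m => M T x m) = fun _ => U x := funext fun m => hterm m x hx
      have h0 : DL F (T, x, lam) = 0 := by
        rw [← cL T x lam, hU]
        exact deriv_const _ _
      rw [hwfun, h0]
      ring
  refine ⟨part1, ?_⟩
  intro huniq lam t ht x hx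
  have h0 : w t x lam = 0 :=
    huniq lam (fun t' x' => w t' x' lam) (part1 lam).1 (part1 lam).2 t ht x hx
  have h1 := hw t x lam
  rw [h0] at h1
  linarith
end

section
/- Fix T > 0, let λ̄ : ℝ → ℝ be C¹, and let v : [0,T] × (0,∞) × ℝ → ℝ be smooth (all mixed partial derivatives appearing exist, are continuous, and commute) with ∂_x v > 0 and ∂_x² v < 0, such that for every z ∈ ℝ the function v(·,·,z) solves the Merton PDE with parameter λ̄(z), and such that the Vega–Gamma relation ∂_z v = (T − t) λ̄(z) λ̄′(z) D₁ v holds, where R = −∂_x v/∂_x² v and D₁ w = R ∂_x w. Let ρ₂ ∈ ℝ and let λ̂, g : ℝ → ℝ be functions. Define w(t,x,z) = (1/2)(T − t)² ρ₂ λ̂(z) λ̄(z) λ̄′(z) g(z) D₁² v(t,x,z). Then for every z, w satisfies ∂_t w + (λ̄(z)²/2) R² ∂_x² w + λ̄(z)² R ∂_x w + ρ₂ λ̂(z) g(z) R ∂_x ∂_z v = 0 on [0,T) × (0,∞), together with the terminal condition w(T,x,z) = 0. -/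
open Set

/-- Partial derivative in the time variable (three-variable version). -/
noncomputable def partialT3 (v : ℝ → ℝ → ℝ → ℝ) : ℝ → ℝ → ℝ → ℝ := fun t x z =>
  deriv (fun s => v s x z) t

/-- Partial derivative in the wealth variable (three-variable version). -/
noncomputable def partialX3 (v : ℝ → ℝ → ℝ → ℝ) : ℝ → ℝ → ℝ → ℝ := fun t x z =>
  deriv (fun y => v t y z) x

/-- Second partial derivative in the wealth variable (three-variable version). -/
noncomputable def partialXX3 (v : ℝ → ℝ → ℝ → ℝ) : ℝ → ℝ → ℝ → ℝ := partialX3 (partialX3 v)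

/-- Partial derivative in the slow variable `z`. -/
noncomputable def partialZ3 (v : ℝ → ℝ → ℝ → ℝ) : ℝ → ℝ → ℝ → ℝ := fun t x z =>
  deriv (fun z' => v t x z') z

/-- The risk-tolerance function `R = −∂ₓv/∂ₓₓv`. -/
noncomputable def R3 (v : ℝ → ℝ → ℝ → ℝ) : ℝ → ℝ → ℝ → ℝ := fun t x z =>
  -(partialX3 v t x z) / partialXX3 v t x z

/-- The first-order operator `D₁ w = R ∂ₓ w` (three-variable version). -/
noncomputable def D13 (R w : ℝ → ℝ → ℝ → ℝ) : ℝ → ℝ → ℝ → ℝ := fun t x z =>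
  R t x z * partialX3 w t x z

open Filter Topology

private lemma slice_x_hasDerivAt {f : ℝ × ℝ → ℝ} (hf : ContDiff ℝ (⊤ : ℕ∞) f) (s y : ℝ) :
    HasDerivAt (fun y' => f (s, y')) (fderiv ℝ f (s, y) (0, 1)) y :=
  (hf.differentiable (by simp) (s, y)).hasFDerivAt.comp_hasDerivAt y
    ((hasDerivAt_const y s).prodMk (hasDerivAt_id y))

private lemma slice_t_hasDerivAt {f : ℝ × ℝ → ℝ} (hf : ContDiff ℝ (⊤ : ℕ∞) f) (s y : ℝ) :
    HasDerivAt (fun s' => f (s', y)) (fderiv ℝ f (s, y) (1, 0)) s :=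
  (hf.differentiable (by simp) (s, y)).hasFDerivAt.comp_hasDerivAt s
    ((hasDerivAt_id s).prodMk (hasDerivAt_const s y))

private lemma pderivX_contDiff {f : ℝ × ℝ → ℝ} (hf : ContDiff ℝ (⊤ : ℕ∞) f) :
    ContDiff ℝ (⊤ : ℕ∞) (fun p : ℝ × ℝ => deriv (fun y => f (p.1, y)) p.2) := by
  have h : (fun p : ℝ × ℝ => deriv (fun y => f (p.1, y)) p.2)
      = fun p => fderiv ℝ f p (0, 1) :=
    funext fun p => (slice_x_hasDerivAt hf p.1 p.2).deriv
  rw [h]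
  exact (ContinuousLinearMap.apply ℝ ℝ ((0 : ℝ), (1 : ℝ))).contDiff.comp
    (hf.fderiv_right (m := (⊤ : ℕ∞)) (by simp))

private lemma schwarz {f : ℝ × ℝ → ℝ} (hf : ContDiff ℝ (⊤ : ℕ∞) f) (t x : ℝ) :
    deriv (fun s => deriv (fun y => f (s, y)) x) t
      = deriv (fun y => deriv (fun s => f (s, y)) t) x := by
  have hdf : Differentiable ℝ (fderiv ℝ f) :=
    (hf.fderiv_right (m := (⊤ : ℕ∞)) (by simp)).differentiable (by simp)
  have hsymm := second_derivative_symmetric (f := f) (f' := fderiv ℝ f)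
      (fun p => (hf.differentiable (by simp) p).hasFDerivAt) (hdf (t, x)).hasFDerivAt
  have h1 : deriv (fun s => deriv (fun y => f (s, y)) x) t
      = fderiv ℝ (fderiv ℝ f) (t, x) (1, 0) (0, 1) := by
    have e : (fun s => deriv (fun y => f (s, y)) x) = fun s => fderiv ℝ f (s, x) (0, 1) :=
      funext fun s => (slice_x_hasDerivAt hf s x).deriv
    rw [e]
    exact (((ContinuousLinearMap.apply ℝ ℝ ((0 : ℝ), (1 : ℝ))).hasFDerivAt.comp (t, x)
      (hdf (t, x)).hasFDerivAt).comp_hasDerivAt t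
      ((hasDerivAt_id t).prodMk (hasDerivAt_const t x))).deriv
  have h2 : deriv (fun y => deriv (fun s => f (s, y)) t) x
      = fderiv ℝ (fderiv ℝ f) (t, x) (0, 1) (1, 0) := by
    have e : (fun y => deriv (fun s => f (s, y)) t) = fun y => fderiv ℝ f (t, y) (1, 0) :=
      funext fun y => (slice_t_hasDerivAt hf t y).deriv
    rw [e]
    exact (((ContinuousLinearMap.apply ℝ ℝ ((1 : ℝ), (0 : ℝ))).hasFDerivAt.comp (t, x)
      (hdf (t, x)).hasFDerivAt).comp_hasDerivAt x
      ((hasDerivAt_const x t).prodMk (hasDerivAt_id x))).deriv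
  rw [h1, h2, hsymm (1, 0) (0, 1)]

set_option maxHeartbeats 1000000 in
private lemma core_aux (m : ℝ) (u A1 A2 Φ : ℝ × ℝ → ℝ) (hu : ContDiff ℝ (⊤ : ℕ∞) u)
    (hA1 : A1 = fun p => deriv (fun y => u (p.1, y)) p.2)
    (hA2 : A2 = fun p => deriv (fun y => A1 (p.1, y)) p.2)
    (hΦ : Φ = fun p => -A1 p / A2 p
      * deriv (fun y => -A1 (p.1, y) / A2 (p.1, y) * A1 (p.1, y)) p.2)
    (t x : ℝ) (hx : x ∈ Ioi (0 : ℝ))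
    (hneg : ∀ y ∈ Ioi (0 : ℝ), A2 (t, y) < 0)
    (hpde : ∀ y ∈ Ioi (0 : ℝ), deriv (fun s => u (s, y)) t = m * A1 (t, y) ^ 2 / A2 (t, y)) :
    DifferentiableAt ℝ (fun s => Φ (s, x)) t ∧
    deriv (fun s => Φ (s, x)) t
      + m * (A1 (t, x) / A2 (t, x)) ^ 2 * deriv (fun y => deriv (fun y' => Φ (t, y')) y) x
      + 2 * m * (-A1 (t, x) / A2 (t, x)) * deriv (fun y => Φ (t, y)) x = 0 := by
  set A3 : ℝ × ℝ → ℝ := fun p => deriv (fun y => A2 (p.1, y)) p.2 with hA3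
  set A4 : ℝ × ℝ → ℝ := fun p => deriv (fun y => A3 (p.1, y)) p.2 with hA4
  set A5 : ℝ × ℝ → ℝ := fun p => deriv (fun y => A4 (p.1, y)) p.2 with hA5
  have hu1 : ContDiff ℝ (⊤ : ℕ∞) A1 := hA1 ▸ pderivX_contDiff hu
  have hu2 : ContDiff ℝ (⊤ : ℕ∞) A2 := hA2 ▸ pderivX_contDiff hu1
  have hu3 : ContDiff ℝ (⊤ : ℕ∞) A3 := hA3 ▸ pderivX_contDiff hu2
  have hu4 : ContDiff ℝ (⊤ : ℕ∞) A4 := hA4 ▸ pderivX_contDiff hu3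
  have key : ∀ (F G : ℝ × ℝ → ℝ), ContDiff ℝ (⊤ : ℕ∞) F →
      (G = fun p => deriv (fun y => F (p.1, y)) p.2) →
      ∀ s y, HasDerivAt (fun y' => F (s, y')) (G (s, y)) y := by
    intro F G hF hG s y
    rw [hG]
    exact (slice_x_hasDerivAt hF s y).differentiableAt.hasDerivAt
  have hd1 := key A1 A2 hu1 hA2
  have hd2 := key A2 A3 hu2 hA3
  have hd3 := key A3 A4 hu3 hA4
  have hd4 := key A4 A5 hu4 hA5
  have hnex : A2 (t, x) ≠ 0 := (hneg x hx).ne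
  -- derivative of the inner function of Φ
  have hΨd : ∀ s y, A2 (s, y) ≠ 0 →
      HasDerivAt (fun y' => -A1 (s, y') / A2 (s, y') * A1 (s, y'))
        ((A1 (s, y) ^ 2 * A3 (s, y) - 2 * A1 (s, y) * A2 (s, y) ^ 2) / A2 (s, y) ^ 2) y := by
    intro s y hne
    have h := (((hd1 s y).neg.div (hd2 s y) hne).mul (hd1 s y))
    refine h.congr_deriv ?_
    simp only [Pi.pow_apply, Pi.mul_apply, Pi.div_apply, Pi.neg_apply, Pi.sub_apply,
      Pi.add_apply]
    field_simp
    ring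
  -- Φ coincides with an explicit rational expression wherever A2 ≠ 0
  have hΦP : ∀ s y, A2 (s, y) ≠ 0 → Φ (s, y)
      = (2 * A1 (s, y) ^ 2 * A2 (s, y) ^ 2 - A1 (s, y) ^ 3 * A3 (s, y)) / A2 (s, y) ^ 3 := by
    intro s y hne
    have e : Φ (s, y) = -A1 (s, y) / A2 (s, y)
        * deriv (fun y' => -A1 (s, y') / A2 (s, y') * A1 (s, y')) y := by rw [hΦ]
    rw [e, (hΨd s y hne).deriv]
    field_simp
    ring
  -- spatial derivative of that rational expression
  have hPd : ∀ s y, A2 (s, y) ≠ 0 →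
      HasDerivAt (fun y' =>
          (2 * A1 (s, y') ^ 2 * A2 (s, y') ^ 2 - A1 (s, y') ^ 3 * A3 (s, y')) / A2 (s, y') ^ 3)
        ((4 * A1 (s, y) * A2 (s, y) ^ 4 - 5 * A1 (s, y) ^ 2 * A2 (s, y) ^ 2 * A3 (s, y)
            + 3 * A1 (s, y) ^ 3 * A3 (s, y) ^ 2 - A1 (s, y) ^ 3 * A2 (s, y) * A4 (s, y))
          / A2 (s, y) ^ 4) y := by
    intro s y hne
    have h := (((((hd1 s y).pow 2).const_mul 2).mul ((hd2 s y).pow 2)).sub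
        (((hd1 s y).pow 3).mul (hd3 s y))).div ((hd2 s y).pow 3) (pow_ne_zero 3 hne)
    refine h.congr_deriv ?_
    simp only [Pi.pow_apply, Pi.mul_apply, Pi.div_apply, Pi.neg_apply, Pi.sub_apply,
      Pi.add_apply]
    field_simp
    ring
  -- first spatial derivative of Φ at points of Ioi 0
  have hΦx : ∀ y ∈ Ioi (0 : ℝ),
      HasDerivAt (fun y' => Φ (t, y'))
        ((4 * A1 (t, y) * A2 (t, y) ^ 4 - 5 * A1 (t, y) ^ 2 * A2 (t, y) ^ 2 * A3 (t, y)
            + 3 * A1 (t, y) ^ 3 * A3 (t, y) ^ 2 - A1 (t, y) ^ 3 * A2 (t, y) * A4 (t, y))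
          / A2 (t, y) ^ 4) y := by
    intro y hy
    refine (hPd t y (hneg y hy).ne).congr_of_eventuallyEq ?_
    filter_upwards [Ioi_mem_nhds hy] with y' hy'
    exact hΦP t y' (hneg y' hy').ne
  -- second spatial derivative of Φ at x
  have hPXd : HasDerivAt (fun y' =>
        (4 * A1 (t, y') * A2 (t, y') ^ 4 - 5 * A1 (t, y') ^ 2 * A2 (t, y') ^ 2 * A3 (t, y')
            + 3 * A1 (t, y') ^ 3 * A3 (t, y') ^ 2 - A1 (t, y') ^ 3 * A2 (t, y') * A4 (t, y'))
          / A2 (t, y') ^ 4)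
      ((4 * A2 (t, x) ^ 6 - 10 * A1 (t, x) * A2 (t, x) ^ 4 * A3 (t, x)
          + 19 * A1 (t, x) ^ 2 * A2 (t, x) ^ 2 * A3 (t, x) ^ 2
          - 8 * A1 (t, x) ^ 2 * A2 (t, x) ^ 3 * A4 (t, x)
          - 12 * A1 (t, x) ^ 3 * A3 (t, x) ^ 3
          + 9 * A1 (t, x) ^ 3 * A2 (t, x) * A3 (t, x) * A4 (t, x)
          - A1 (t, x) ^ 3 * A2 (t, x) ^ 2 * A5 (t, x)) / A2 (t, x) ^ 5) x := by
    have h := HasDerivAt.div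
        (HasDerivAt.sub
          (HasDerivAt.add
            (HasDerivAt.sub (((hd1 t x).const_mul 4).mul ((hd2 t x).pow 4))
              (((((hd1 t x).pow 2).const_mul 5).mul ((hd2 t x).pow 2)).mul (hd3 t x)))
            ((((hd1 t x).pow 3).const_mul 3).mul ((hd3 t x).pow 2)))
          ((((hd1 t x).pow 3).mul (hd2 t x)).mul (hd4 t x)))
        ((hd2 t x).pow 4) (pow_ne_zero 4 hnex)
    refine h.congr_deriv ?_
    simp only [Pi.pow_apply, Pi.mul_apply, Pi.div_apply, Pi.neg_apply, Pi.sub_apply,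
      Pi.add_apply]
    field_simp
    ring
  have hΦxx : HasDerivAt (fun y => deriv (fun y' => Φ (t, y')) y)
      ((4 * A2 (t, x) ^ 6 - 10 * A1 (t, x) * A2 (t, x) ^ 4 * A3 (t, x)
          + 19 * A1 (t, x) ^ 2 * A2 (t, x) ^ 2 * A3 (t, x) ^ 2
          - 8 * A1 (t, x) ^ 2 * A2 (t, x) ^ 3 * A4 (t, x)
          - 12 * A1 (t, x) ^ 3 * A3 (t, x) ^ 3
          + 9 * A1 (t, x) ^ 3 * A2 (t, x) * A3 (t, x) * A4 (t, x)
          - A1 (t, x) ^ 3 * A2 (t, x) ^ 2 * A5 (t, x)) / A2 (t, x) ^ 5) x := by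
    refine hPXd.congr_of_eventuallyEq ?_
    filter_upwards [Ioi_mem_nhds hx] with y hy
    exact (hΦx y hy).deriv
  -- the time-derivative side: x-derivatives of the PDE right-hand side
  have hG0d : ∀ y, A2 (t, y) ≠ 0 →
      HasDerivAt (fun y' => m * A1 (t, y') ^ 2 / A2 (t, y'))
        ((2 * m * A1 (t, y) * A2 (t, y) ^ 2 - m * A1 (t, y) ^ 2 * A3 (t, y))
          / A2 (t, y) ^ 2) y := by
    intro y hne
    have h := (((hd1 t y).pow 2).const_mul m).div (hd2 t y) hne
    refine h.congr_deriv ?_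
    simp only [Pi.pow_apply, Pi.mul_apply, Pi.div_apply, Pi.neg_apply, Pi.sub_apply,
      Pi.add_apply]
    field_simp
    ring
  have hT1 : ∀ y ∈ Ioi (0 : ℝ),
      HasDerivAt (fun y' => deriv (fun s => u (s, y')) t)
        ((2 * m * A1 (t, y) * A2 (t, y) ^ 2 - m * A1 (t, y) ^ 2 * A3 (t, y))
          / A2 (t, y) ^ 2) y := by
    intro y hy
    refine (hG0d y (hneg y hy).ne).congr_of_eventuallyEq ?_
    filter_upwards [Ioi_mem_nhds hy] with y' hy'
    exact hpde y' hy'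
  have hG1d : ∀ y, A2 (t, y) ≠ 0 →
      HasDerivAt (fun y' =>
          (2 * m * A1 (t, y') * A2 (t, y') ^ 2 - m * A1 (t, y') ^ 2 * A3 (t, y'))
            / A2 (t, y') ^ 2)
        ((2 * m * A2 (t, y) ^ 4 - 2 * m * A1 (t, y) * A2 (t, y) ^ 2 * A3 (t, y)
            + 2 * m * A1 (t, y) ^ 2 * A3 (t, y) ^ 2 - m * A1 (t, y) ^ 2 * A2 (t, y) * A4 (t, y))
          / A2 (t, y) ^ 3) y := by
    intro y hne
    have h := ((((hd1 t y).const_mul (2 * m)).mul ((hd2 t y).pow 2)).sub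
        ((((hd1 t y).pow 2).const_mul m).mul (hd3 t y))).div
        ((hd2 t y).pow 2) (pow_ne_zero 2 hne)
    refine h.congr_deriv ?_
    simp only [Pi.pow_apply, Pi.mul_apply, Pi.div_apply, Pi.neg_apply, Pi.sub_apply,
      Pi.add_apply]
    field_simp
    ring
  have hT2 : ∀ y ∈ Ioi (0 : ℝ),
      HasDerivAt (fun y' => deriv (fun y'' => deriv (fun s => u (s, y'')) t) y')
        ((2 * m * A2 (t, y) ^ 4 - 2 * m * A1 (t, y) * A2 (t, y) ^ 2 * A3 (t, y)
            + 2 * m * A1 (t, y) ^ 2 * A3 (t, y) ^ 2 - m * A1 (t, y) ^ 2 * A2 (t, y) * A4 (t, y))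
          / A2 (t, y) ^ 3) y := by
    intro y hy
    refine (hG1d y (hneg y hy).ne).congr_of_eventuallyEq ?_
    filter_upwards [Ioi_mem_nhds hy] with y' hy'
    exact (hT1 y' hy').deriv
  have hG2d : ∀ y, A2 (t, y) ≠ 0 →
      HasDerivAt (fun y' =>
          (2 * m * A2 (t, y') ^ 4 - 2 * m * A1 (t, y') * A2 (t, y') ^ 2 * A3 (t, y')
              + 2 * m * A1 (t, y') ^ 2 * A3 (t, y') ^ 2
              - m * A1 (t, y') ^ 2 * A2 (t, y') * A4 (t, y')) / A2 (t, y') ^ 3)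
        ((6 * m * A1 (t, y) * A2 (t, y) ^ 2 * A3 (t, y) ^ 2
            - 4 * m * A1 (t, y) * A2 (t, y) ^ 3 * A4 (t, y)
            - 6 * m * A1 (t, y) ^ 2 * A3 (t, y) ^ 3
            + 6 * m * A1 (t, y) ^ 2 * A2 (t, y) * A3 (t, y) * A4 (t, y)
            - m * A1 (t, y) ^ 2 * A2 (t, y) ^ 2 * A5 (t, y)) / A2 (t, y) ^ 4) y := by
    intro y hne
    have h := HasDerivAt.div
        (HasDerivAt.sub
          (HasDerivAt.add
            (HasDerivAt.sub (((hd2 t y).pow 4).const_mul (2 * m))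
              ((((hd1 t y).const_mul (2 * m)).mul ((hd2 t y).pow 2)).mul (hd3 t y)))
            ((((hd1 t y).pow 2).const_mul (2 * m)).mul ((hd3 t y).pow 2)))
          (((((hd1 t y).pow 2).const_mul m).mul (hd2 t y)).mul (hd4 t y)))
        ((hd2 t y).pow 3) (pow_ne_zero 3 hne)
    refine h.congr_deriv ?_
    simp only [Pi.pow_apply, Pi.mul_apply, Pi.div_apply, Pi.neg_apply, Pi.sub_apply,
      Pi.add_apply]
    field_simp
    ring
  -- mixed derivatives via Schwarz
  have inner1 : ∀ y, deriv (fun s => A1 (s, y)) t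
      = deriv (fun y' => deriv (fun s => u (s, y')) t) y := by
    intro y
    have e : (fun s => A1 (s, y)) = fun s => deriv (fun y' => u (s, y')) y := by
      funext s; rw [hA1]
    rw [e, schwarz hu t y]
  have inner2 : ∀ y, deriv (fun s => A2 (s, y)) t
      = deriv (fun y' => deriv (fun y'' => deriv (fun s => u (s, y'')) t) y') y := by
    intro y
    have e : (fun s => A2 (s, y)) = fun s => deriv (fun y' => A1 (s, y')) y := by
      funext s; rw [hA2]
    rw [e, schwarz hu1 t y]
    congr 1
    funext y'
    exact inner1 y'
  have hb1 : deriv (fun s => A1 (s, x)) t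
      = (2 * m * A1 (t, x) * A2 (t, x) ^ 2 - m * A1 (t, x) ^ 2 * A3 (t, x)) / A2 (t, x) ^ 2 := by
    rw [inner1 x]
    exact (hT1 x hx).deriv
  have hb2 : deriv (fun s => A2 (s, x)) t
      = (2 * m * A2 (t, x) ^ 4 - 2 * m * A1 (t, x) * A2 (t, x) ^ 2 * A3 (t, x)
          + 2 * m * A1 (t, x) ^ 2 * A3 (t, x) ^ 2
          - m * A1 (t, x) ^ 2 * A2 (t, x) * A4 (t, x)) / A2 (t, x) ^ 3 := by
    rw [inner2 x]
    exact (hT2 x hx).deriv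
  have hb3 : deriv (fun s => A3 (s, x)) t
      = (6 * m * A1 (t, x) * A2 (t, x) ^ 2 * A3 (t, x) ^ 2
          - 4 * m * A1 (t, x) * A2 (t, x) ^ 3 * A4 (t, x)
          - 6 * m * A1 (t, x) ^ 2 * A3 (t, x) ^ 3
          + 6 * m * A1 (t, x) ^ 2 * A2 (t, x) * A3 (t, x) * A4 (t, x)
          - m * A1 (t, x) ^ 2 * A2 (t, x) ^ 2 * A5 (t, x)) / A2 (t, x) ^ 4 := by
    have e : (fun s => A3 (s, x)) = fun s => deriv (fun y => A2 (s, y)) x := by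
      funext s; rw [hA3]
    rw [e, schwarz hu2 t x]
    have e2 : (fun y => deriv (fun s => A2 (s, y)) t)
        = fun y => deriv (fun y' => deriv (fun y'' => deriv (fun s => u (s, y'')) t) y') y := by
      funext y; exact inner2 y
    rw [e2]
    refine ((hG2d x hnex).congr_of_eventuallyEq ?_).deriv
    filter_upwards [Ioi_mem_nhds hx] with y hy
    exact (hT2 y hy).deriv
  -- time derivative of Φ at (t, x)
  have hbd1 : HasDerivAt (fun s => A1 (s, x)) (deriv (fun s => A1 (s, x)) t) t :=
    (slice_t_hasDerivAt hu1 t x).differentiableAt.hasDerivAt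
  have hbd2 : HasDerivAt (fun s => A2 (s, x)) (deriv (fun s => A2 (s, x)) t) t :=
    (slice_t_hasDerivAt hu2 t x).differentiableAt.hasDerivAt
  have hbd3 : HasDerivAt (fun s => A3 (s, x)) (deriv (fun s => A3 (s, x)) t) t :=
    (slice_t_hasDerivAt hu3 t x).differentiableAt.hasDerivAt
  have hPt : HasDerivAt (fun s =>
        (2 * A1 (s, x) ^ 2 * A2 (s, x) ^ 2 - A1 (s, x) ^ 3 * A3 (s, x)) / A2 (s, x) ^ 3)
      (((4 * A1 (t, x) * A2 (t, x) ^ 3 - 3 * A1 (t, x) ^ 2 * A2 (t, x) * A3 (t, x))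
            * deriv (fun s => A1 (s, x)) t
          + (3 * A1 (t, x) ^ 3 * A3 (t, x) - 2 * A1 (t, x) ^ 2 * A2 (t, x) ^ 2)
            * deriv (fun s => A2 (s, x)) t
          - A1 (t, x) ^ 3 * A2 (t, x) * deriv (fun s => A3 (s, x)) t)
        / A2 (t, x) ^ 4) t := by
    have h := ((((hbd1.pow 2).const_mul 2).mul (hbd2.pow 2)).sub
        ((hbd1.pow 3).mul hbd3)).div (hbd2.pow 3) (pow_ne_zero 3 hnex)
    refine h.congr_deriv ?_
    simp only [Pi.pow_apply, Pi.mul_apply, Pi.div_apply, Pi.neg_apply, Pi.sub_apply,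
      Pi.add_apply]
    field_simp
    ring
  have hΦt : HasDerivAt (fun s => Φ (s, x))
      (((4 * A1 (t, x) * A2 (t, x) ^ 3 - 3 * A1 (t, x) ^ 2 * A2 (t, x) * A3 (t, x))
            * deriv (fun s => A1 (s, x)) t
          + (3 * A1 (t, x) ^ 3 * A3 (t, x) - 2 * A1 (t, x) ^ 2 * A2 (t, x) ^ 2)
            * deriv (fun s => A2 (s, x)) t
          - A1 (t, x) ^ 3 * A2 (t, x) * deriv (fun s => A3 (s, x)) t)
        / A2 (t, x) ^ 4) t := by
    refine hPt.congr_of_eventuallyEq ?_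
    have hc : Continuous fun s => A2 (s, x) :=
      hu2.continuous.comp (continuous_id.prodMk continuous_const)
    have hev0 : ∀ᶠ s in 𝓝 t, A2 (s, x) < 0 :=
      hc.continuousAt.eventually_lt continuousAt_const (hneg x hx)
    filter_upwards [hev0] with s hs
    exact hΦP s x hs.ne
  refine ⟨hΦt.differentiableAt, ?_⟩
  rw [hΦt.deriv, hΦxx.deriv, (hΦx x hx).deriv, hb1, hb2, hb3]
  have h2 : A2 (t, x) ≠ 0 := hnex
  field_simp
  ring

set_option maxHeartbeats 1000000 in
/-- The explicit first-order slow-scale correction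
`w(t,x,z) = (1/2)(T − t)² ρ₂ λ̂(z) λ̄(z) λ̄′(z) g(z) D₁² v(t,x,z)` satisfies
`∂ₜw + (λ̄(z)²/2) R² ∂ₓₓw + λ̄(z)² R ∂ₓw + ρ₂ λ̂(z) g(z) R ∂ₓ∂_z v = 0` on `[0,T) × (0,∞)`
for every `z`, with terminal condition `w(T,x,z) = 0`. -/
theorem slow_correction_pde (T : ℝ) (hT : 0 < T)
    (lamBar : ℝ → ℝ) (hlamBar : ContDiff ℝ 1 lamBar)
    (v : ℝ → ℝ → ℝ → ℝ)
    (hsmooth : ContDiff ℝ (⊤ : ℕ∞) (fun p : ℝ × ℝ × ℝ => v p.1 p.2.1 p.2.2))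
    (hvx_pos : ∀ t ∈ Icc (0 : ℝ) T, ∀ x ∈ Ioi (0 : ℝ), ∀ z : ℝ, 0 < partialX3 v t x z)
    (hvxx_neg : ∀ t ∈ Icc (0 : ℝ) T, ∀ x ∈ Ioi (0 : ℝ), ∀ z : ℝ, partialXX3 v t x z < 0)
    (hpde : ∀ z : ℝ, ∀ t ∈ Ico (0 : ℝ) T, ∀ x ∈ Ioi (0 : ℝ),
      partialT3 v t x z
        - (lamBar z) ^ 2 / 2 * (partialX3 v t x z) ^ 2 / partialXX3 v t x z = 0)
    (hVegaGamma : ∀ t ∈ Icc (0 : ℝ) T, ∀ x ∈ Ioi (0 : ℝ), ∀ z : ℝ,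
      partialZ3 v t x z = (T - t) * lamBar z * deriv lamBar z * D13 (R3 v) v t x z)
    (ρ₂ : ℝ) (lamHat g : ℝ → ℝ)
    (w : ℝ → ℝ → ℝ → ℝ)
    (hw : ∀ t x z, w t x z = 1 / 2 * (T - t) ^ 2 * ρ₂ * lamHat z * lamBar z
        * deriv lamBar z * g z * D13 (R3 v) (D13 (R3 v) v) t x z) :
    ∀ z : ℝ,
      (∀ t ∈ Ico (0 : ℝ) T, ∀ x ∈ Ioi (0 : ℝ),
        partialT3 w t x z + (lamBar z) ^ 2 / 2 * (R3 v t x z) ^ 2 * partialXX3 w t x z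
          + (lamBar z) ^ 2 * R3 v t x z * partialX3 w t x z
          + ρ₂ * lamHat z * g z * R3 v t x z * partialX3 (partialZ3 v) t x z = 0) ∧
      (∀ x ∈ Ioi (0 : ℝ), w T x z = 0) := by
  intro z
  constructor
  · intro t ht x hx
    set u : ℝ × ℝ → ℝ := fun p => v p.1 p.2 z with hudef
    set A1 : ℝ × ℝ → ℝ := fun p => deriv (fun y => u (p.1, y)) p.2 with hA1def
    set A2 : ℝ × ℝ → ℝ := fun p => deriv (fun y => A1 (p.1, y)) p.2 with hA2def
    set Φ : ℝ × ℝ → ℝ := fun p => -A1 p / A2 p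
        * deriv (fun y => -A1 (p.1, y) / A2 (p.1, y) * A1 (p.1, y)) p.2 with hΦdef
    have hu : ContDiff ℝ (⊤ : ℕ∞) u := by
      rw [hudef]
      exact hsmooth.comp (contDiff_fst.prodMk (contDiff_snd.prodMk contDiff_const))
    have hneg : ∀ y ∈ Ioi (0 : ℝ), A2 (t, y) < 0 := by
      intro y hy
      exact hvxx_neg t (Ico_subset_Icc_self ht) y hy z
    have hpde' : ∀ y ∈ Ioi (0 : ℝ),
        deriv (fun s => u (s, y)) t = lamBar z ^ 2 / 2 * A1 (t, y) ^ 2 / A2 (t, y) := by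
      intro y hy
      have h := hpde z t ht y hy
      rw [sub_eq_zero] at h
      exact h
    obtain ⟨hdT, hcore⟩ := core_aux (lamBar z ^ 2 / 2) u A1 A2 Φ hu hA1def hA2def hΦdef
      t x hx hneg hpde'
    set C' : ℝ := 1 / 2 * ρ₂ * lamHat z * lamBar z * deriv lamBar z * g z with hC'
    have hwT : partialT3 w t x z
        = C' * (-2 * (T - t) * Φ (t, x) + (T - t) ^ 2 * deriv (fun s => Φ (s, x)) t) := by
      have hfun : (fun s => w s x z) = fun s => C' * ((T - s) ^ 2 * Φ (s, x)) := by
        funext s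
        rw [hw s x z, show D13 (R3 v) (D13 (R3 v) v) s x z = Φ (s, x) from rfl]
        ring
      have hprod := ((((hasDerivAt_id' (x := t)).const_sub T).pow 2).mul
        hdT.hasDerivAt).const_mul C'
      rw [show partialT3 w t x z = deriv (fun s => w s x z) t from rfl, hfun,
        (show HasDerivAt (fun s => C' * ((T - s) ^ 2 * Φ (s, x))) _ t from hprod).deriv]
      simp only [Pi.pow_apply]
      push_cast
      ring
    have hwX : ∀ y, partialX3 w t y z = C' * (T - t) ^ 2 * deriv (fun y' => Φ (t, y')) y := by
      intro y
      have hfy : (fun y' => w t y' z) = fun y' => (C' * (T - t) ^ 2) * Φ (t, y') := by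
        funext y'
        rw [hw t y' z, show D13 (R3 v) (D13 (R3 v) v) t y' z = Φ (t, y') from rfl]
        ring
      rw [show partialX3 w t y z = deriv (fun y' => w t y' z) y from rfl, hfy,
        deriv_const_mul_field]
    have hwXX : partialXX3 w t x z
        = C' * (T - t) ^ 2 * deriv (fun y => deriv (fun y' => Φ (t, y')) y) x := by
      rw [show partialXX3 w t x z = deriv (fun y => partialX3 w t y z) x from rfl,
        show (fun y => partialX3 w t y z)
          = fun y => (C' * (T - t) ^ 2) * deriv (fun y' => Φ (t, y')) y from funext hwX,
        deriv_const_mul_field]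
    have hZX : partialX3 (partialZ3 v) t x z
        = ((T - t) * lamBar z * deriv lamBar z)
          * deriv (fun y => -A1 (t, y) / A2 (t, y) * A1 (t, y)) x := by
      rw [show partialX3 (partialZ3 v) t x z = deriv (fun y => partialZ3 v t y z) x from rfl]
      have hev : (fun y => partialZ3 v t y z) =ᶠ[𝓝 x]
          fun y => ((T - t) * lamBar z * deriv lamBar z)
            * (-A1 (t, y) / A2 (t, y) * A1 (t, y)) := by
        filter_upwards [Ioi_mem_nhds hx] with y hy
        rw [hVegaGamma t (Ico_subset_Icc_self ht) y hy z,
          show D13 (R3 v) v t y z = -A1 (t, y) / A2 (t, y) * A1 (t, y) from rfl]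
      rw [hev.deriv_eq, deriv_const_mul_field]
    have hR : R3 v t x z = -A1 (t, x) / A2 (t, x) := rfl
    have hΦval : Φ (t, x)
        = -A1 (t, x) / A2 (t, x) * deriv (fun y => -A1 (t, y) / A2 (t, y) * A1 (t, y)) x := rfl
    rw [hwT, hwXX, hwX x, hZX, hR, hΦval]
    linear_combination (C' * (T - t) ^ 2) * hcore
  · intro x hx
    rw [hw, sub_self]
    ring
end

section
/- Fix T > 0 and λ̄ ∈ ℝ, let a, b, λ : ℝ → ℝ be functions, and let θ ∈ C²(ℝ) satisfy the Poisson equation (1/2) a(y)² θ″(y) + b(y) θ′(y) = λ(y)² − λ̄² for all y ∈ ℝ. Let v be a C^∞ function on [0,T] × (0,∞) with ∂_x v > 0 and ∂_x² v < 0 solving the Merton PDE with parameter λ̄; set R = −∂_x v/∂_x² v and D₁ w = R ∂_x w. Define F(t,x,y) = −(1/2) θ(y) D₁ v(t,x). Then at every point of [0,T) × (0,∞) × ℝ, ( (1/2) a(y)² ∂_y² + b(y) ∂_y ) F + ( ∂_t + λ(y)² R ∂_x + (λ(y)²/2) R² ∂_x² ) v = 0. -/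
open Set

/-- The term `F(t,x,y) = −(1/2) θ(y) D₁ v(t,x)` solves the order-one equation
`L₀ F + L₂ v = 0`, i.e.
`((1/2) a(y)² ∂_y² + b(y) ∂_y) F + (∂ₜ + λ(y)² R ∂ₓ + (λ(y)²/2) R² ∂ₓₓ) v = 0`,
where `θ` solves the Poisson equation `(1/2) a(y)² θ″ + b(y) θ′ = λ(y)² − λ̄²` and `v`
solves the Merton PDE with parameter `λ̄`. -/
theorem order_one_solvability (T lamBar : ℝ) (hT : 0 < T)
    (a b lam : ℝ → ℝ) (θ : ℝ → ℝ) (hθ : ContDiff ℝ 2 θ)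
    (hPoisson : ∀ y : ℝ,
      1 / 2 * (a y) ^ 2 * deriv (deriv θ) y + b y * deriv θ y = (lam y) ^ 2 - lamBar ^ 2)
    (v : ℝ → ℝ → ℝ)
    (hsmooth : ContDiff ℝ (⊤ : ℕ∞) (fun p : ℝ × ℝ => v p.1 p.2))
    (hvx_pos : ∀ t ∈ Icc (0 : ℝ) T, ∀ x ∈ Ioi (0 : ℝ), 0 < partialX v t x)
    (hvxx_neg : ∀ t ∈ Icc (0 : ℝ) T, ∀ x ∈ Ioi (0 : ℝ), partialXX v t x < 0)
    (hpde : ∀ t ∈ Ico (0 : ℝ) T, ∀ x ∈ Ioi (0 : ℝ),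
      partialT v t x - lamBar ^ 2 / 2 * (partialX v t x) ^ 2 / partialXX v t x = 0)
    (R : ℝ → ℝ → ℝ)
    (hR : ∀ t x, R t x = -(partialX v t x) / partialXX v t x)
    (F : ℝ → ℝ → ℝ → ℝ)
    (hF : ∀ t x y, F t x y = -(1 / 2) * θ y * D1 R v t x) :
    ∀ t ∈ Ico (0 : ℝ) T, ∀ x ∈ Ioi (0 : ℝ), ∀ y : ℝ,
      1 / 2 * (a y) ^ 2 * deriv (fun y' => deriv (fun y'' => F t x y'') y') y
          + b y * deriv (fun y' => F t x y') y
          + (partialT v t x + (lam y) ^ 2 * R t x * partialX v t x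
              + (lam y) ^ 2 / 2 * (R t x) ^ 2 * partialXX v t x) = 0 := by
  intro t ht x hx y
  have hvxx : partialXX v t x < 0 :=
    hvxx_neg t ⟨ht.1, ht.2.le⟩ x hx
  have hvxx0 : partialXX v t x ≠ 0 := ne_of_lt hvxx
  set c : ℝ := -(1 / 2) * D1 R v t x with hc
  have hFy : (fun y' => F t x y') = fun y' => c * θ y' := by
    funext y'; rw [hF]; ring
  have hd1 : (fun y' => deriv (fun y'' => F t x y'') y') = fun y' => c * deriv θ y' := by
    funext y'
    rw [hFy, deriv_const_mul_field]
  have hd2 : deriv (fun y' => deriv (fun y'' => F t x y'') y') y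
      = c * deriv (deriv θ) y := by
    rw [hd1, deriv_const_mul_field]
  rw [hd2, hFy, deriv_const_mul_field]
  have hP := hPoisson y
  have hpd := hpde t ht x hx
  have hRx := hR t x
  have key : 1 / 2 * a y ^ 2 * (c * deriv (deriv θ) y) + b y * (c * deriv θ y)
      = c * (lam y ^ 2 - lamBar ^ 2) := by
    linear_combination c * hP
  rw [key]
  have hc' : c = -(1 / 2) * (R t x * partialX v t x) := by
    rw [hc]; rfl
  rw [hc', hRx] at *
  have hT' : partialT v t x = lamBar ^ 2 / 2 * (partialX v t x) ^ 2 / partialXX v t x := by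
    linarith [hpd]
  rw [hT']
  field_simp
  ring
end

section
/- Fix T > 0 and let R : [0,T) × (0,∞) → (0,∞) be a positive function that is seven times continuously differentiable in x. Then the following two statements are equivalent: (a) there exist constants K_j > 0, 0 ≤ j ≤ 6, such that |R(t,x)^j ∂_x^{(j+1)} R(t,x)| ≤ K_j for all (t,x) ∈ [0,T) × (0,∞); (b) there exist constants K̃_j > 0, 1 ≤ j ≤ 7, such that |∂_x^{(j)}(R^j)(t,x)| ≤ K̃_j for all (t,x) ∈ [0,T) × (0,∞). -/
/-!
Write `w_j = f^j f^{(j+1)}` (`weightedIteratedDeriv j f`). Since `(f^{m+1})' = (m+1) f^m f'`,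
Leibniz's rule gives `∂^{k+1}(f^{m+1}) = (m+1) ∑_{l ≤ k} C(k,l) ∂^l(f^m) f^{(k-l+1)}`, and
`f^{c+b} f^{(b+1)} = f^c w_b`. By induction on `i`, `∂^i(f^m) = O(f^{m-i})` for `i ≤ m` as soon
as `w_0, …, w_{i-1}` are bounded; for `i = m` this is (a) ⇒ (b). Conversely, the `l = 0` term of
`∂^{j+1}(f^{j+1})` is `(j+1) w_j` and the remaining terms are bounded once `w_0, …, w_{j-1}` are,
so (b) ⇒ (a) by strong induction on `j`. Uniform bounds over `(t, x) ∈ [0,T) × (0,∞)` are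
expressed as `=O[𝓟 ([0,T) ×ˢ (0,∞))] 1`.
-/

open Set Filter Topology Asymptotics

theorem iteratedDeriv_succ_fun_pow_succ {f : ℝ → ℝ} {x : ℝ} {k : ℕ}
    (hf : ContDiffAt ℝ (k + 1) f x) (m : ℕ) :
    iteratedDeriv (k + 1) (fun y => f y ^ (m + 1)) x =
      (m + 1) * ∑ l ∈ Finset.range (k + 1),
        k.choose l * (iteratedDeriv l (fun y => f y ^ m) x * iteratedDeriv (k - l + 1) f x) := by
  have hderiv : deriv (fun y => f y ^ (m + 1)) =ᶠ[𝓝 x]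
      fun y => (m + 1) * (f y ^ m * deriv f y) := by
    filter_upwards [hf.eventually (by simp)] with y hy
    rw [deriv_fun_pow (hy.differentiableAt (by simp))]
    push_cast
    ring
  have hfm : ContDiffAt ℝ k (fun y => f y ^ m) x := (hf.of_le (by simp)).pow m
  have hf' : ContDiffAt ℝ k (deriv f) x := hf.derivWithin le_rfl
  rw [iteratedDeriv_succ', hderiv.iteratedDeriv_eq, iteratedDeriv_const_mul _ (hfm.mul hf'),
    iteratedDeriv_fun_mul hfm hf']
  congr 1
  refine Finset.sum_congr rfl fun l _ => ?_
  rw [← iteratedDeriv_succ', mul_assoc]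

noncomputable def weightedIteratedDeriv (j : ℕ) (f : ℝ → ℝ) (x : ℝ) : ℝ :=
  f x ^ j * iteratedDeriv (j + 1) f x

section Family

variable {α : Type*} {l : Filter α} {F : α → ℝ → ℝ} {X : α → ℝ}

theorem Asymptotics.IsBigO.mul_iteratedDeriv_succ {g : α → ℝ} {b c : ℕ}
    (hg : g =O[l] fun p => F p (X p) ^ (c + b))
    (hw : (fun p => weightedIteratedDeriv b (F p) (X p)) =O[l] fun _ => (1 : ℝ)) :
    (fun p => g p * iteratedDeriv (b + 1) (F p) (X p)) =O[l] fun p => F p (X p) ^ c := by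
  have h := hg.mul (isBigO_refl (fun p => iteratedDeriv (b + 1) (F p) (X p)) l)
  refine h.trans ?_
  simpa [weightedIteratedDeriv, pow_add, mul_assoc] using
    (isBigO_refl (fun p => F p (X p) ^ c) l).mul hw

theorem isBigO_iteratedDeriv_fun_pow {i m : ℕ} (him : i ≤ m)
    (hF : ∀ᶠ p in l, ContDiffAt ℝ i (F p) (X p))
    (hw : ∀ a < i, (fun p => weightedIteratedDeriv a (F p) (X p)) =O[l] fun _ => (1 : ℝ)) :
    (fun p => iteratedDeriv i (fun y => F p y ^ m) (X p)) =O[l] fun p => F p (X p) ^ (m - i) := by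
  induction i using Nat.strong_induction_on generalizing m with
  | _ i ih =>
  rcases i with _ | k
  · simpa using isBigO_refl (fun p => F p (X p) ^ m) l
  obtain ⟨m, rfl⟩ : ∃ m', m = m' + 1 := ⟨m - 1, by omega⟩
  have hterm : ∀ j ∈ Finset.range (k + 1),
      (fun p => (k.choose j : ℝ) * (iteratedDeriv j (fun y => F p y ^ m) (X p) *
        iteratedDeriv (k - j + 1) (F p) (X p))) =O[l] fun p => F p (X p) ^ (m + 1 - (k + 1)) := by
    intro j hj
    have hjk : j ≤ k := Nat.lt_succ_iff.mp (Finset.mem_range.mp hj)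
    have hpow : (fun p => iteratedDeriv j (fun y => F p y ^ m) (X p)) =O[l]
        fun p => F p (X p) ^ (m + 1 - (k + 1) + (k - j)) := by
      rw [show m + 1 - (k + 1) + (k - j) = m - j by omega]
      exact ih j (by omega) (by omega)
        (hF.mono fun p hp => hp.of_le (by exact_mod_cast (by omega))) fun a ha => hw a (by omega)
    exact (hpow.mul_iteratedDeriv_succ (hw _ (by omega))).const_mul_left _
  refine ((IsBigO.fun_sum hterm).const_mul_left ((m : ℝ) + 1)).congr' ?_ EventuallyEq.rfl
  filter_upwards [hF] with p hp
  rw [iteratedDeriv_succ_fun_pow_succ hp]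

theorem forall_weightedIteratedDeriv_isBigO_one_iff {n : ℕ}
    (hF : ∀ᶠ p in l, ContDiffAt ℝ (n + 1) (F p) (X p)) :
    (∀ j ≤ n, (fun p => weightedIteratedDeriv j (F p) (X p)) =O[l] fun _ => (1 : ℝ)) ↔
      ∀ j, 1 ≤ j → j ≤ n + 1 →
        (fun p => iteratedDeriv j (fun y => F p y ^ j) (X p)) =O[l] fun _ => (1 : ℝ) := by
  have hF_le : ∀ i ≤ n + 1, ∀ᶠ p in l, ContDiffAt ℝ i (F p) (X p) := fun i hi =>
    hF.mono fun p hp => hp.of_le (by exact_mod_cast hi)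
  constructor
  · intro hw j _ hj
    simpa using isBigO_iteratedDeriv_fun_pow le_rfl (hF_le j hj) fun a ha => hw a (by omega)
  · intro hpow j
    induction j using Nat.strong_induction_on with
    | _ j ih =>
    intro hj
    have hterm : ∀ i ∈ Finset.range j,
        (fun p => (j.choose (i + 1) : ℝ) * (iteratedDeriv (i + 1) (fun y => F p y ^ j) (X p) *
          iteratedDeriv (j - (i + 1) + 1) (F p) (X p))) =O[l] fun p => F p (X p) ^ 0 := by
      intro i hi
      have hij : i < j := Finset.mem_range.mp hi
      have hder : (fun p => iteratedDeriv (i + 1) (fun y => F p y ^ j) (X p)) =O[l]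
          fun p => F p (X p) ^ (0 + (j - (i + 1))) := by
        rw [zero_add]
        exact isBigO_iteratedDeriv_fun_pow hij (hF_le _ (by omega))
          fun a ha => ih a (by omega) (by omega)
      exact (hder.mul_iteratedDeriv_succ (ih _ (by omega) (by omega))).const_mul_left _
    have hsum := ((hpow (j + 1) (by omega) (by omega)).const_mul_left ((j : ℝ) + 1)⁻¹).sub
      (IsBigO.fun_sum hterm)
    refine (hsum.trans_eventuallyEq (by simp)).congr' ?_ EventuallyEq.rfl
    filter_upwards [hF_le (j + 1) (by omega)] with p hp
    rw [iteratedDeriv_succ_fun_pow_succ hp, Finset.sum_range_succ', ← mul_assoc,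
      inv_mul_cancel₀ (by positivity)]
    simp [weightedIteratedDeriv]

end Family

theorem exists_pos_bounds_iff_forall_isBigO_one {P : ℕ → Prop} {g : ℕ → ℝ → ℝ → ℝ}
    {A B : Set ℝ} :
    (∃ K : ℕ → ℝ, (∀ j, P j → 0 < K j) ∧ ∀ j, P j → ∀ t ∈ A, ∀ x ∈ B, |g j t x| ≤ K j) ↔
      ∀ j, P j → (fun p : ℝ × ℝ => g j p.1 p.2) =O[𝓟 (A ×ˢ B)] fun _ => (1 : ℝ) := by
  constructor
  · rintro ⟨K, -, hK⟩ j hj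
    refine isBigO_principal.2 ⟨K j, fun p hp => ?_⟩
    simpa using hK j hj p.1 hp.1 p.2 hp.2
  · intro h
    have hK : ∀ j, ∃ K : ℝ, 0 < K ∧ (P j → ∀ t ∈ A, ∀ x ∈ B, |g j t x| ≤ K) := by
      intro j
      by_cases hj : P j
      · obtain ⟨c, hc⟩ := isBigO_principal.1 (h j hj)
        refine ⟨max c 1, by positivity, fun _ t ht x hx => ?_⟩
        have := hc (t, x) ⟨ht, hx⟩
        simp only [norm_one, mul_one, Real.norm_eq_abs] at this
        exact this.trans (le_max_left c 1)
      · exact ⟨1, one_pos, fun h => absurd h hj⟩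
    choose K hKpos hK using hK
    exact ⟨K, fun j _ => hKpos j, hK⟩

theorem risk_tolerance_bounds_equiv_general (T : ℝ)
    (R : ℝ → ℝ → ℝ)
    (hC7 : ∀ t ∈ Ico (0 : ℝ) T, ContDiffOn ℝ 7 (R t) (Ioi 0)) :
    (∃ K : ℕ → ℝ, (∀ j : ℕ, j ≤ 6 → 0 < K j) ∧
        ∀ j : ℕ, j ≤ 6 → ∀ t ∈ Ico (0 : ℝ) T, ∀ x ∈ Ioi (0 : ℝ),
          |(R t x) ^ j * iteratedDeriv (j + 1) (R t) x| ≤ K j) ↔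
    (∃ K' : ℕ → ℝ, (∀ j : ℕ, 1 ≤ j → j ≤ 7 → 0 < K' j) ∧
        ∀ j : ℕ, 1 ≤ j → j ≤ 7 → ∀ t ∈ Ico (0 : ℝ) T, ∀ x ∈ Ioi (0 : ℝ),
          |iteratedDeriv j (fun y => (R t y) ^ j) x| ≤ K' j) := by
  have hR : ∀ᶠ p in 𝓟 (Ico 0 T ×ˢ Ioi 0), ContDiffAt ℝ (6 + 1) (R p.1) p.2 :=
    eventually_principal.2 fun p hp => (hC7 p.1 hp.1).contDiffAt (isOpen_Ioi.mem_nhds hp.2)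
  have hpow := exists_pos_bounds_iff_forall_isBigO_one (P := fun j => 1 ≤ j ∧ j ≤ 7)
    (g := fun j t x => iteratedDeriv j (fun y => R t y ^ j) x) (A := Ico 0 T) (B := Ioi 0)
  simp only [and_imp] at hpow
  exact exists_pos_bounds_iff_forall_isBigO_one.trans
    ((forall_weightedIteratedDeriv_isBigO_one_iff hR).trans hpow.symm)

/-- Equivalence of the two families of risk-tolerance derivative bounds: bounds on the
weighted derivatives `Rʲ ∂ₓ⁽ʲ⁺¹⁾R` for `0 ≤ j ≤ 6` hold iff bounds on the derivatives of
powers `∂ₓ⁽ʲ⁾(Rʲ)` for `1 ≤ j ≤ 7` hold, uniformly on `[0,T) × (0,∞)`. -/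
theorem risk_tolerance_bounds_equiv (T : ℝ) (hT : 0 < T)
    (R : ℝ → ℝ → ℝ)
    (hpos : ∀ t ∈ Ico (0 : ℝ) T, ∀ x ∈ Ioi (0 : ℝ), 0 < R t x)
    (hC7 : ∀ t ∈ Ico (0 : ℝ) T, ContDiffOn ℝ 7 (R t) (Ioi 0)) :
    (∃ K : ℕ → ℝ, (∀ j : ℕ, j ≤ 6 → 0 < K j) ∧
        ∀ j : ℕ, j ≤ 6 → ∀ t ∈ Ico (0 : ℝ) T, ∀ x ∈ Ioi (0 : ℝ),
          |(R t x) ^ j * iteratedDeriv (j + 1) (R t) x| ≤ K j) ↔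
    (∃ K' : ℕ → ℝ, (∀ j : ℕ, 1 ≤ j → j ≤ 7 → 0 < K' j) ∧
        ∀ j : ℕ, 1 ≤ j → j ≤ 7 → ∀ t ∈ Ico (0 : ℝ) T, ∀ x ∈ Ioi (0 : ℝ),
          |iteratedDeriv j (fun y => (R t y) ^ j) x| ≤ K' j) :=
  risk_tolerance_bounds_equiv_general T R hC7
end

section
/- Fix T > 0, let λ̄, λ̂ : ℝ → ℝ with λ̄ of class C¹, let λ : ℝ × ℝ → ℝ, a, b : ℝ → ℝ, g : ℝ → ℝ be functions, and let ρ₂ ∈ ℝ. Let v : [0,T] × (0,∞) × ℝ → ℝ be smooth with ∂_x v > 0 and ∂_x² v < 0 such that for every z the function v(·,·,z) solves the Merton PDE with parameter λ̄(z); set R = −∂_x v/∂_x² v, D₁ w = R ∂_x w, D₂ w = R² ∂_x² w. Let u : [0,T] × (0,∞) × ℝ → ℝ be smooth and satisfy, for every z, the slow-correction PDE ∂_t u + (λ̄(z)²/2) R² ∂_x² u + λ̄(z)² R ∂_x u + ρ₂ λ̂(z) g(z) R ∂_x ∂_z v = 0 on [0,T) × (0,∞). Suppose θ and θ₂ are functions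 of (y,z), C² in y, solving the Poisson equations (1/2) a(y)² ∂_y² θ + b(y) ∂_y θ = λ(y,z)² − λ̄(z)² and (1/2) a(y)² ∂_y² θ₂ + b(y) ∂_y θ₂ = λ(y,z) − λ̂(z). Define F(t,x,y,z) = −θ(y,z)( (1/2) D₂ + D₁ ) u(t,x,z) − θ₂(y,z) ρ₂ g(z) R ∂_x ∂_z v(t,x,z). Then at every point, ( (1/2) a(y)² ∂_y² + b(y) ∂_y ) F + ( ∂_t + λ(y,z)² R ∂_x + (λ(y,z)²/2) R² ∂_x² ) u + ρ₂ g(z) λ(y,z) R ∂_x ∂_z v = 0. -/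
open Set

/-- The explicit `v^{π⁰,(2,1)} = −θ((1/2)D₂ + D₁)u − θ₂ ρ₂ g D₁ v_z` solves the order-√δ
solvability equation `L₀ F + L₂ u + M₁ v = 0` under the zeroth-order strategy, where `u`
is the slow correction, `θ`, `θ₂` solve the indicated Poisson equations in `y`, and `v`
solves the Merton PDE with parameter `λ̄(z)` for each `z`. -/
theorem order_sqrt_delta_solvability (T : ℝ) (hT : 0 < T)
    (lamBar lamHat : ℝ → ℝ) (hlamBar : ContDiff ℝ 1 lamBar)
    (lam : ℝ → ℝ → ℝ) (a b g : ℝ → ℝ) (ρ₂ : ℝ)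
    (v : ℝ → ℝ → ℝ → ℝ)
    (hv_smooth : ContDiff ℝ (⊤ : ℕ∞) (fun p : ℝ × ℝ × ℝ => v p.1 p.2.1 p.2.2))
    (hvx_pos : ∀ t ∈ Icc (0 : ℝ) T, ∀ x ∈ Ioi (0 : ℝ), ∀ z : ℝ, 0 < partialX3 v t x z)
    (hvxx_neg : ∀ t ∈ Icc (0 : ℝ) T, ∀ x ∈ Ioi (0 : ℝ), ∀ z : ℝ, partialXX3 v t x z < 0)
    (hv_pde : ∀ z : ℝ, ∀ t ∈ Ico (0 : ℝ) T, ∀ x ∈ Ioi (0 : ℝ),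
      partialT3 v t x z
        - (lamBar z) ^ 2 / 2 * (partialX3 v t x z) ^ 2 / partialXX3 v t x z = 0)
    (u : ℝ → ℝ → ℝ → ℝ)
    (hu_smooth : ContDiff ℝ (⊤ : ℕ∞) (fun p : ℝ × ℝ × ℝ => u p.1 p.2.1 p.2.2))
    (hu_pde : ∀ z : ℝ, ∀ t ∈ Ico (0 : ℝ) T, ∀ x ∈ Ioi (0 : ℝ),
      partialT3 u t x z + (lamBar z) ^ 2 / 2 * (R3 v t x z) ^ 2 * partialXX3 u t x z
        + (lamBar z) ^ 2 * R3 v t x z * partialX3 u t x z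
        + ρ₂ * lamHat z * g z * R3 v t x z * partialX3 (partialZ3 v) t x z = 0)
    (θ θ₂ : ℝ → ℝ → ℝ)
    (hθ : ∀ z : ℝ, ContDiff ℝ 2 (fun y => θ y z))
    (hθ₂ : ∀ z : ℝ, ContDiff ℝ 2 (fun y => θ₂ y z))
    (hPoissonθ : ∀ y z : ℝ,
      1 / 2 * (a y) ^ 2 * deriv (fun y' => deriv (fun y'' => θ y'' z) y') y
          + b y * deriv (fun y' => θ y' z) y = (lam y z) ^ 2 - (lamBar z) ^ 2)
    (hPoissonθ₂ : ∀ y z : ℝ,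
      1 / 2 * (a y) ^ 2 * deriv (fun y' => deriv (fun y'' => θ₂ y'' z) y') y
          + b y * deriv (fun y' => θ₂ y' z) y = lam y z - lamHat z)
    (F : ℝ → ℝ → ℝ → ℝ → ℝ)
    (hF : ∀ t x y z, F t x y z
        = -θ y z * (1 / 2 * (R3 v t x z) ^ 2 * partialXX3 u t x z
            + R3 v t x z * partialX3 u t x z)
          - θ₂ y z * ρ₂ * g z * R3 v t x z * partialX3 (partialZ3 v) t x z) :
    ∀ t ∈ Ico (0 : ℝ) T, ∀ x ∈ Ioi (0 : ℝ), ∀ y z : ℝ,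
      1 / 2 * (a y) ^ 2 * deriv (fun y' => deriv (fun y'' => F t x y'' z) y') y
          + b y * deriv (fun y' => F t x y' z) y
          + (partialT3 u t x z + (lam y z) ^ 2 * R3 v t x z * partialX3 u t x z
              + (lam y z) ^ 2 / 2 * (R3 v t x z) ^ 2 * partialXX3 u t x z)
          + ρ₂ * g z * lam y z * R3 v t x z * partialX3 (partialZ3 v) t x z = 0 := by
  intro t ht x hx y z
  -- abbreviations
  set Ruv := R3 v t x z with hRuv
  have hθd : Differentiable ℝ (fun y' => θ y' z) := (hθ z).differentiable (by norm_num)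
  have hθ₂d : Differentiable ℝ (fun y' => θ₂ y' z) := (hθ₂ z).differentiable (by norm_num)
  have hθ2 : ContDiff ℝ 1 (deriv (fun y' => θ y' z)) := by
    have := (contDiff_succ_iff_deriv (n := 1)).mp (by exact_mod_cast hθ z)
    exact this.2.2
  have hθ₂2 : ContDiff ℝ 1 (deriv (fun y' => θ₂ y' z)) := by
    have := (contDiff_succ_iff_deriv (n := 1)).mp (by exact_mod_cast hθ₂ z)
    exact this.2.2
  have hθd' : Differentiable ℝ (deriv (fun y' => θ y' z)) := hθ2.differentiable one_ne_zero
  have hθ₂d' : Differentiable ℝ (deriv (fun y' => θ₂ y' z)) := hθ₂2.differentiable one_ne_zero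
  set A := 1 / 2 * Ruv ^ 2 * partialXX3 u t x z + Ruv * partialX3 u t x z with hA
  set B := ρ₂ * g z * Ruv * partialX3 (partialZ3 v) t x z with hB
  have hFfun : (fun y' => F t x y' z) = fun y' => -θ y' z * A - θ₂ y' z * B := by
    funext y'
    rw [hF]
    simp only [hA, hB, hRuv]
    ring
  have hd1 : ∀ y' : ℝ, deriv (fun y'' => F t x y'' z) y'
      = -(deriv (fun y'' => θ y'' z) y') * A - (deriv (fun y'' => θ₂ y'' z) y') * B := by
    intro y'
    rw [hFfun]
    have h1 : HasDerivAt (fun y'' => -θ y'' z * A - θ₂ y'' z * B)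
        (-(deriv (fun y'' => θ y'' z) y') * A - (deriv (fun y'' => θ₂ y'' z) y') * B) y' := by
      exact (((hθd y').hasDerivAt.neg.mul_const A).sub ((hθ₂d y').hasDerivAt.mul_const B))
    exact h1.deriv
  have hd2 : deriv (fun y' => deriv (fun y'' => F t x y'' z) y') y
      = -(deriv (fun y' => deriv (fun y'' => θ y'' z) y') y) * A
        - (deriv (fun y' => deriv (fun y'' => θ₂ y'' z) y') y) * B := by
    have : (fun y' => deriv (fun y'' => F t x y'' z) y')
        = fun y' => -(deriv (fun y'' => θ y'' z) y') * A - (deriv (fun y'' => θ₂ y'' z) y') * B :=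
      funext hd1
    rw [this]
    have h1 : HasDerivAt (fun y' => -(deriv (fun y'' => θ y'' z) y') * A
        - (deriv (fun y'' => θ₂ y'' z) y') * B)
        (-(deriv (fun y' => deriv (fun y'' => θ y'' z) y') y) * A
          - (deriv (fun y' => deriv (fun y'' => θ₂ y'' z) y') y) * B) y := by
      exact (((hθd' y).hasDerivAt.neg.mul_const A).sub ((hθ₂d' y).hasDerivAt.mul_const B))
    exact h1.deriv
  rw [hd2, hd1 y]
  have hu' := hu_pde z t ht x hx
  have hP1 := hPoissonθ y z
  have hP2 := hPoissonθ₂ y z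
  rw [← hRuv] at hu'
  linear_combination hu' - A * hP1 - B * hP2
end
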